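/- arXiv:1508.03062 — 9 statements merged into one kernel-verified Lean document; each statement's English description precedes it below -/
import Mathlib

section
/- Let G be a pan-free graph, C a chordless cycle (hole) in G of length at least five, and x a vertex outside C that has a neighbor v on C. Then some vertex u of C is adjacent to both v and x. -/
def IsHole {V : Type*} (G : SimpleGraph V) (n : ℕ) (f : ZMod n → V) : Prop :=
  4 ≤ n ∧ Function.Injective f ∧
    ∀ i j : ZMod n, G.Adj (f i) (f j) ↔ (j = i + 1 ∨ i = j + 1)

def HasInducedPan {V : Type*} (G : SimpleGraph V) : Prop :=
  ∃ (n : ℕ) (f : ZMod n → V) (x : V),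
    IsHole G n f ∧ x ∉ Set.range f ∧ ∃! i : ZMod n, G.Adj x (f i)

def HasEvenHole {V : Type*} (G : SimpleGraph V) : Prop :=
  ∃ (n : ℕ) (f : ZMod n → V), IsHole G n f ∧ Even n

lemma castinj {ℓ a b : ℕ} (ha : a < ℓ) (hb : b < ℓ)
    (h : (a : ZMod ℓ) = b) : a = b := by
  haveI : NeZero ℓ := ⟨by omega⟩
  have := congrArg ZMod.val h
  rwa [ZMod.val_cast_of_lt ha, ZMod.val_cast_of_lt hb] at this

lemma pan_aux {V : Type*} (G : SimpleGraph V) {ℓ : ℕ} {f : ZMod ℓ → V}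
    (hC : IsHole G ℓ f) (hℓ : 5 ≤ ℓ) {x : V} (hx : x ∉ Set.range f) (i : ZMod ℓ)
    (h0 : G.Adj x (f i))
    (hm1 : ¬ G.Adj x (f (i + ((ℓ - 1 : ℕ) : ZMod ℓ))))
    (t : ℕ) (ht2 : 2 ≤ t) (ht3 : t + 3 ≤ ℓ)
    (hT : G.Adj x (f (i + (t : ℕ))))
    (hmin : ∀ s : ℕ, 1 ≤ s → s < t → ¬ G.Adj x (f (i + (s : ℕ)))) :
    HasInducedPan G := by
  haveI : NeZero ℓ := ⟨by omega⟩
  obtain ⟨-, finj, fadj⟩ := hC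
  have hcm1 : ((ℓ - 1 : ℕ) : ZMod ℓ) = -1 := by
    have h1 : ((ℓ - 1 : ℕ) : ZMod ℓ) + 1 = ((ℓ : ℕ) : ZMod ℓ) := by
      have h2 : (ℓ - 1) + 1 = ℓ := by omega
      rw [← h2]; push_cast; ring
    rw [ZMod.natCast_self] at h1
    exact eq_neg_of_add_eq_zero_left h1
  -- adjacency on the arc
  have adjC : ∀ c d : ℕ, c ≤ t → d ≤ t →
      (G.Adj (f (i + (c : ℕ))) (f (i + (d : ℕ))) ↔ (d = c + 1 ∨ c = d + 1)) := by
    intro c d hc hd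
    rw [fadj]
    constructor
    · rintro (h | h)
      · left
        have h' : ((d : ℕ) : ZMod ℓ) = ((c + 1 : ℕ) : ZMod ℓ) := by
          have h2 : i + (d : ZMod ℓ) = i + ((c : ZMod ℓ) + 1) := by rw [h]; ring
          push_cast
          exact add_left_cancel h2
        exact castinj (by omega) (by omega) h'
      · right
        have h' : ((c : ℕ) : ZMod ℓ) = ((d + 1 : ℕ) : ZMod ℓ) := by
          have h2 : i + (c : ZMod ℓ) = i + ((d : ZMod ℓ) + 1) := by rw [h]; ring
          push_cast
          exact add_left_cancel h2
        exact castinj (by omega) (by omega) h'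
    · rintro (h | h)
      · left; subst h; push_cast; ring
      · right; subst h; push_cast; ring
  -- adjacency to x on the arc
  have adjX : ∀ c : ℕ, c ≤ t → (G.Adj x (f (i + (c : ℕ))) ↔ (c = 0 ∨ c = t)) := by
    intro c hc
    constructor
    · intro h
      by_contra hcon
      push_neg at hcon
      exact hmin c (by omega) (by omega) h
    · rintro (rfl | rfl)
      · simpa using h0
      · exact hT
  -- adjacency of f(i-1) to the arc
  have adjP : ∀ c : ℕ, c ≤ t →
      (G.Adj (f (i + ((ℓ - 1 : ℕ) : ZMod ℓ))) (f (i + (c : ℕ))) ↔ c = 0) := by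
    intro c hc
    rw [fadj]
    constructor
    · rintro (h | h)
      · have h2 : i + ((c : ℕ) : ZMod ℓ) = i + (((ℓ - 1 : ℕ) : ZMod ℓ) + 1) := by
          rw [h]; ring
        have h3 := add_left_cancel h2
        have h4 : ((c : ℕ) : ZMod ℓ) = ((0 : ℕ) : ZMod ℓ) := by
          rw [h3, hcm1]; push_cast; ring
        have := castinj (show c < ℓ by omega) (show (0:ℕ) < ℓ by omega) h4
        omega
      · exfalso
        have h2 : i + ((ℓ - 1 : ℕ) : ZMod ℓ) = i + (((c : ℕ) : ZMod ℓ) + 1) := by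
          rw [h]; ring
        have h3 := add_left_cancel h2
        have h4 : ((ℓ - 1 : ℕ) : ZMod ℓ) = ((c + 1 : ℕ) : ZMod ℓ) := by
          rw [h3]; push_cast; ring
        have := castinj (show ℓ - 1 < ℓ by omega) (show c + 1 < ℓ by omega) h4
        omega
    · rintro rfl
      left
      push_cast
      rw [hcm1]; ring
  -- injectivity on the arc
  have injC : ∀ c d : ℕ, c ≤ t → d ≤ t → f (i + (c : ℕ)) = f (i + (d : ℕ)) → c = d := by
    intro c d hc hd h
    have h1 := finj h
    have h2 := add_left_cancel h1
    exact castinj (by omega) (by omega) h2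
  have neX : ∀ v : ZMod ℓ, x ≠ f v := by
    intro v h; exact hx ⟨v, h.symm⟩
  -- the new hole
  set nn := t + 2 with hnn
  haveI : NeZero nn := ⟨by omega⟩
  have vallt : ∀ m : ZMod nn, m.val < nn := fun m => ZMod.val_lt m
  have valnz : ∀ m : ZMod nn, m ≠ 0 → 1 ≤ m.val := by
    intro m hm
    rcases Nat.eq_zero_or_pos m.val with h | h
    · exact absurd ((ZMod.val_eq_zero m).1 h) hm
    · omega
  have hv1 : (1 : ZMod nn).val = 1 := by
    rw [ZMod.val_one_eq_one_mod]
    exact Nat.mod_eq_of_lt (by omega)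
  have hmodval : ∀ m : ℕ, m < nn → (m + 1) % nn = if m + 1 = nn then 0 else m + 1 := by
    intro m h
    split_ifs with h'
    · rw [h', Nat.mod_self]
    · exact Nat.mod_eq_of_lt (by omega)
  have valconv : ∀ a b : ZMod nn, b = a + 1 ↔ b.val = (a.val + 1) % nn := by
    intro a b
    constructor
    · rintro rfl
      rw [ZMod.val_add, hv1]
    · intro h
      exact ZMod.val_injective nn (by rw [h, ZMod.val_add, hv1])
  have bconv : ∀ a b : ZMod nn, b = a + 1 ↔
      b.val = (if a.val + 1 = nn then 0 else a.val + 1) := by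
    intro a b
    rw [valconv, hmodval a.val (vallt a)]
  have hone : (1 : ZMod nn) ≠ 0 := by
    intro h
    have := congrArg ZMod.val h
    rw [hv1, ZMod.val_zero] at this
    omega
  set g : ZMod nn → V := fun m => if m = 0 then x else f (i + ((m.val - 1 : ℕ) : ZMod ℓ)) with hg
  have g0 : g 0 = x := by simp [hg]
  have gne : ∀ m : ZMod nn, m ≠ 0 → g m = f (i + ((m.val - 1 : ℕ) : ZMod ℓ)) := by
    intro m hm; simp [hg, hm]
  have hbound : ∀ m : ZMod nn, m ≠ 0 → m.val - 1 ≤ t := by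
    intro m hm
    have := vallt m
    omega
  have ghole : IsHole G nn g := by
    refine ⟨by omega, ?_, ?_⟩
    · intro a b hab
      by_cases ha : a = 0 <;> by_cases hb : b = 0
      · rw [ha, hb]
      · rw [ha, g0, gne b hb] at hab
        exact absurd hab (neX _)
      · rw [hb, g0, gne a ha] at hab
        exact absurd hab.symm (neX _)
      · rw [gne a ha, gne b hb] at hab
        have h1 := injC _ _ (hbound a ha) (hbound b hb) hab
        have ha1 := valnz a ha
        have hb1 := valnz b hb
        exact ZMod.val_injective nn (by omega)
    · intro a b
      have hva := vallt a
      have hvb := vallt b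
      by_cases ha : a = 0 <;> by_cases hb : b = 0
      · subst ha; subst hb
        rw [g0]
        constructor
        · intro h; exact absurd rfl h.ne
        · rintro (h | h) <;> (rw [zero_add] at h; exact absurd h.symm hone)
      · subst ha
        rw [g0, gne b hb, adjX _ (hbound b hb)]
        have hb1 := valnz b hb
        have hz : (0 : ZMod nn).val = 0 := ZMod.val_zero
        rw [bconv 0 b, bconv b 0]
        split_ifs with h1 h2 <;> omega
      · subst hb
        rw [g0, gne a ha, SimpleGraph.adj_comm, adjX _ (hbound a ha)]
        have ha1 := valnz a ha
        have hz : (0 : ZMod nn).val = 0 := ZMod.val_zero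
        rw [bconv a 0, bconv 0 a]
        split_ifs with h1 h2 <;> omega
      · rw [gne a ha, gne b hb, adjC _ _ (hbound a ha) (hbound b hb)]
        have ha1 := valnz a ha
        have hb1 := valnz b hb
        rw [bconv a b, bconv b a]
        split_ifs with h1 h2 <;> omega
  -- the pendant vertex
  refine ⟨nn, g, f (i + ((ℓ - 1 : ℕ) : ZMod ℓ)), ghole, ?_, ?_⟩
  · rintro ⟨m, hm⟩
    by_cases h : m = 0
    · rw [h, g0] at hm
      exact neX _ hm
    · rw [gne m h] at hm
      have h1 : ((ℓ - 1 : ℕ) : ZMod ℓ) = ((m.val - 1 : ℕ) : ZMod ℓ) := by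
        have h0' := finj hm
        exact (add_left_cancel h0').symm
      have h2 := castinj (show ℓ - 1 < ℓ by omega)
        (show m.val - 1 < ℓ by have := hbound m h; omega) h1
      have := hbound m h
      omega
  · refine ⟨1, ?_, ?_⟩
    · show G.Adj (f (i + ((ℓ - 1 : ℕ) : ZMod ℓ))) (g 1)
      rw [gne 1 hone, hv1]
      simp only [Nat.sub_self]
      rw [adjP 0 (by omega)]
    · intro m hm
      by_cases h : m = 0
      · rw [h, g0] at hm
        exact absurd hm.symm hm1
      · rw [gne m h] at hm
        have h1 := (adjP _ (hbound m h)).1 hm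
        have h2 := valnz m h
        exact ZMod.val_injective nn (by rw [hv1]; omega)

theorem stmt_0 {V : Type*} (G : SimpleGraph V) (hpan : ¬ HasInducedPan G)
    (ℓ : ℕ) (f : ZMod ℓ → V) (hC : IsHole G ℓ f) (hℓ : 5 ≤ ℓ)
    (x : V) (hx : x ∉ Set.range f) (i : ZMod ℓ) (hxi : G.Adj x (f i)) :
    ∃ j : ZMod ℓ, G.Adj (f j) (f i) ∧ G.Adj (f j) x := by
  haveI : NeZero ℓ := ⟨by omega⟩
  obtain ⟨-, finj, fadj⟩ := hC
  by_contra hcon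
  push_neg at hcon
  -- x is not adjacent to f (i+1) nor f (i-1)
  have hcastm1 : ((ℓ - 1 : ℕ) : ZMod ℓ) = -1 := by
    have h1 : ((ℓ - 1 : ℕ) : ZMod ℓ) + 1 = ((ℓ : ℕ) : ZMod ℓ) := by
      have : (ℓ - 1) + 1 = ℓ := by omega
      rw [← this]; push_cast; ring
    rw [ZMod.natCast_self] at h1
    exact eq_neg_of_add_eq_zero_left h1
  have hp1 : ¬ G.Adj x (f (i + 1)) := by
    intro h
    exact hcon (i + 1) ((fadj _ _).2 (Or.inr rfl)) h.symm
  have hm1 : ¬ G.Adj x (f (i + ((ℓ - 1 : ℕ) : ZMod ℓ))) := by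
    intro h
    refine hcon (i + ((ℓ - 1 : ℕ) : ZMod ℓ)) ((fadj _ _).2 (Or.inl ?_)) h.symm
    rw [hcastm1]; ring
  by_cases hS : ∃ s : ℕ, (1 ≤ s ∧ s ≤ ℓ - 1) ∧ G.Adj x (f (i + (s : ℕ)))
  · classical
    set t := Nat.find hS with htdef
    obtain ⟨⟨ht1, htl⟩, htadj⟩ := Nat.find_spec hS
    rw [← htdef] at ht1 htl htadj
    have hmin : ∀ s : ℕ, 1 ≤ s → s < t → ¬ G.Adj x (f (i + (s : ℕ))) := by
      intro s hs1 hst hadj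
      exact Nat.find_min hS hst ⟨⟨hs1, by omega⟩, hadj⟩
    have ht2 : 2 ≤ t := by
      by_contra h
      push_neg at h
      have h1 : t = 1 := by omega
      rw [h1] at htadj
      apply hp1
      simpa using htadj
    have htne : t ≠ ℓ - 1 := by
      intro h
      rw [h] at htadj
      exact hm1 htadj
    have htle : t ≤ ℓ - 2 := by omega
    rcases Nat.lt_or_ge t (ℓ - 2) with hcase | hcase
    · -- t ≤ ℓ - 3 : direct pan
      exact absurd (pan_aux G ⟨by omega, finj, fadj⟩ hℓ hx i hxi hm1 t ht2 (by omega)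
        htadj hmin) hpan
    · -- t = ℓ - 2 : reflect
      have hteq : t = ℓ - 2 := by omega
      set f' : ZMod ℓ → V := fun j => f (-j) with hf'
      have hC' : IsHole G ℓ f' := by
        refine ⟨by omega, ?_, ?_⟩
        · intro a b hab
          have := finj hab
          have : -(-a) = -(-b) := by rw [this]
          simpa using this
        · intro a b
          rw [hf']
          simp only
          rw [fadj]
          constructor
          · rintro (h | h)
            · right; linear_combination h
            · left; linear_combination h
          · rintro (h | h)
            · right; linear_combination h
            · left; linear_combination h
      have hx' : x ∉ Set.range f' := by
        rintro ⟨v, hv⟩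
        exact hx ⟨-v, hv⟩
      have h0' : G.Adj x (f' (-i)) := by
        rw [hf']; simpa using hxi
      have hm1' : ¬ G.Adj x (f' (-i + ((ℓ - 1 : ℕ) : ZMod ℓ))) := by
        rw [hf', hcastm1]
        simp only
        have : -(-i + -1) = i + 1 := by ring
        rw [this]
        exact hp1
      have hT' : G.Adj x (f' (-i + ((2:ℕ) : ZMod ℓ))) := by
        rw [hf']
        simp only
        have hc2 : ((ℓ - 2 : ℕ) : ZMod ℓ) = -2 := by
          have h1 : ((ℓ - 2 : ℕ) : ZMod ℓ) + 2 = ((ℓ : ℕ) : ZMod ℓ) := by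
            have : (ℓ - 2) + 2 = ℓ := by omega
            rw [← this]; push_cast; ring
          rw [ZMod.natCast_self] at h1
          exact eq_neg_of_add_eq_zero_left h1
        have heq : -(-i + ((2:ℕ) : ZMod ℓ)) = i + ((ℓ - 2 : ℕ) : ZMod ℓ) := by
          rw [hc2]; push_cast; ring
        rw [heq]
        rw [hteq] at htadj
        exact htadj
      have hmin' : ∀ s : ℕ, 1 ≤ s → s < 2 → ¬ G.Adj x (f' (-i + (s : ℕ))) := by
        intro s hs1 hs2
        have : s = 1 := by omega
        subst this
        rw [hf']
        simp only
        have : -(-i + ((1:ℕ) : ZMod ℓ)) = i + ((ℓ - 1 : ℕ) : ZMod ℓ) := by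
          rw [hcastm1]; push_cast; ring
        rw [this]
        exact hm1
      exact absurd (pan_aux G hC' hℓ hx' (-i) h0' hm1' 2 (by omega) (by omega)
        hT' hmin') hpan
  · -- x has a unique neighbor on C: pan with C itself
    push_neg at hS
    apply hpan
    refine ⟨ℓ, f, x, ⟨by omega, finj, fadj⟩, hx, i, hxi, ?_⟩
    intro j hj
    by_contra hji
    have : j = i + ((j - i).val : ℕ) := by
      rw [ZMod.natCast_zmod_val]; ring
    have hval1 : 1 ≤ (j - i).val := by
      rcases Nat.eq_zero_or_pos (j - i).val with h | h
      · exfalso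
        have := (ZMod.val_eq_zero (j - i)).1 h
        apply hji
        have : j - i + i = 0 + i := by rw [this]
        simpa using this
      · omega
    have hvall : (j - i).val ≤ ℓ - 1 := by
      have := ZMod.val_lt (j - i)
      omega
    exact hS _ ⟨hval1, hvall⟩ (this ▸ hj)
end

section
/- Let G be a pan-free graph, C a hole in G of length at least five, and x a vertex outside C with exactly three neighbors on C. Then those three neighbors form a subpath of C (i.e., they are three consecutive vertices of C). -/
/-! ### Auxiliary lemmas -/

lemma castInj' {ℓ s t : ℕ} (hs : s < ℓ) (ht : t < ℓ) (h : (s : ZMod ℓ) = t) : s = t := by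
  have h2 := congrArg ZMod.val h
  rwa [ZMod.val_cast_of_lt hs, ZMod.val_cast_of_lt ht] at h2

lemma addCastInj {ℓ : ℕ} (a : ZMod ℓ) {s t : ℕ} (hs : s < ℓ) (ht : t < ℓ) :
    a + (s : ZMod ℓ) = a + t ↔ s = t := by
  constructor
  · intro h; exact castInj' hs ht (add_left_cancel h)
  · rintro rfl; rfl

lemma val_cast_self {ℓ : ℕ} [NeZero ℓ] (u : ZMod ℓ) : ((u.val : ℕ) : ZMod ℓ) = u :=
  ZMod.natCast_rightInverse u

lemma dvd_between {ℓ s : ℕ} (h : ℓ ∣ s) (h1 : 0 < s) (h2 : s < 2 * ℓ) : s = ℓ := by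
  obtain ⟨k, rfl⟩ := h
  rcases Nat.lt_or_ge k 2 with hk | hk
  · interval_cases k <;> omega
  · exfalso
    have : ℓ * 2 ≤ ℓ * k := Nat.mul_le_mul_left ℓ hk
    omega

lemma dvd_small {ℓ s : ℕ} (h : ℓ ∣ s) (h1 : 0 < s) (h2 : s < 3 * ℓ) : s = ℓ ∨ s = 2 * ℓ := by
  obtain ⟨k, rfl⟩ := h
  rcases Nat.lt_or_ge k 3 with hk | hk
  · interval_cases k <;> omega
  · exfalso
    have : ℓ * 3 ≤ ℓ * k := Nat.mul_le_mul_left ℓ hk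
    omega

lemma triple_dvd {ℓ : ℕ} [NeZero ℓ] (u v w : ZMod ℓ) :
    ℓ ∣ (v - u).val + (w - v).val + (u - w).val := by
  have hz : (((v - u).val + (w - v).val + (u - w).val : ℕ) : ZMod ℓ) = 0 := by
    push_cast
    rw [val_cast_self, val_cast_self, val_cast_self]
    ring
  exact (ZMod.natCast_eq_zero_iff _ ℓ).mp hz

lemma pair_val_sum {ℓ : ℕ} [NeZero ℓ] {u v : ZMod ℓ} (huv : u ≠ v) :
    (v - u).val + (u - v).val = ℓ := by
  have h1 : ℓ ∣ (v - u).val + (u - v).val := by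
    have hz : (((v - u).val + (u - v).val : ℕ) : ZMod ℓ) = 0 := by
      push_cast
      rw [val_cast_self, val_cast_self]
      ring
    exact (ZMod.natCast_eq_zero_iff _ ℓ).mp hz
  have h2 : 0 < (v - u).val := ZMod.val_pos.mpr (sub_ne_zero.mpr huv.symm)
  have h3 : 0 < (u - v).val := ZMod.val_pos.mpr (sub_ne_zero.mpr huv)
  have h4 := ZMod.val_lt (v - u)
  have h5 := ZMod.val_lt (u - v)
  exact dvd_between h1 (by omega) (by omega)

/-- Core construction: if `x` sees exactly the three vertices `a`, `a+g1`, `a+g1+g2` of the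
hole, with `g1, g2 ≥ 2`, then `x` together with the arc from `a` to `a+g1` and the pendant
vertex `a+g1+1` yields an induced pan. -/
lemma core_pan {V : Type*} (G : SimpleGraph V) (ℓ : ℕ) (f : ZMod ℓ → V)
    (hC : IsHole G ℓ f) (x : V) (hx : x ∉ Set.range f)
    (a : ZMod ℓ) (g1 g2 g3 : ℕ) (hg1 : 2 ≤ g1) (hg2 : 2 ≤ g2) (hg3 : 1 ≤ g3)
    (hsum : g1 + g2 + g3 = ℓ)
    (hS : ∀ j, G.Adj x (f j) ↔ (j = a ∨ j = a + (g1 : ZMod ℓ) ∨ j = a + ((g1 + g2 : ℕ) : ZMod ℓ))) :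
    HasInducedPan G := by
  obtain ⟨hℓ4, hfinj, hadj⟩ := hC
  have hℓ5 : 5 ≤ ℓ := by omega
  haveI : NeZero ℓ := ⟨by omega⟩
  -- adjacency of x to arc vertices
  have xadj : ∀ t : ℕ, t < ℓ →
      (G.Adj x (f (a + (t : ZMod ℓ))) ↔ (t = 0 ∨ t = g1 ∨ t = g1 + g2)) := by
    intro t ht
    rw [hS]
    have h0 : a + (t : ZMod ℓ) = a ↔ t = 0 := by
      have h0' := addCastInj a ht (show 0 < ℓ by omega)
      simpa using h0'
    have h1 : a + (t : ZMod ℓ) = a + (g1 : ZMod ℓ) ↔ t = g1 := addCastInj a ht (by omega)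
    have h2 : a + (t : ZMod ℓ) = a + ((g1 + g2 : ℕ) : ZMod ℓ) ↔ t = g1 + g2 :=
      addCastInj a ht (by omega)
    rw [h0, h1, h2]
  -- adjacency between arc vertices
  have farc : ∀ s t : ℕ, s + 1 < ℓ → t + 1 < ℓ →
      (G.Adj (f (a + (s : ZMod ℓ))) (f (a + (t : ZMod ℓ))) ↔ (t = s + 1 ∨ s = t + 1)) := by
    intro s t hs ht
    rw [hadj]
    have e1 : a + (t : ZMod ℓ) = a + (s : ZMod ℓ) + 1 ↔ t = s + 1 := by
      rw [show a + (s : ZMod ℓ) + 1 = a + ((s + 1 : ℕ) : ZMod ℓ) by push_cast; ring]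
      exact addCastInj a (by omega) hs
    have e2 : a + (s : ZMod ℓ) = a + (t : ZMod ℓ) + 1 ↔ s = t + 1 := by
      rw [show a + (t : ZMod ℓ) + 1 = a + ((t + 1 : ℕ) : ZMod ℓ) by push_cast; ring]
      exact addCastInj a (by omega) ht
    rw [e1, e2]
  set n := g1 + 2 with hn
  haveI : NeZero n := ⟨by omega⟩
  have vadd1 : ∀ i j : ZMod n, j = i + 1 ↔ (j.val = i.val + 1 ∨ (i.val = n - 1 ∧ j.val = 0)) := by
    intro i j
    have hi := ZMod.val_lt i
    have hj := ZMod.val_lt j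
    constructor
    · rintro rfl
      rw [ZMod.val_add, ZMod.val_one_eq_one_mod, Nat.mod_eq_of_lt (show 1 < n by omega)]
      rcases Nat.lt_or_ge (i.val + 1) n with hlt | hge
      · left; exact Nat.mod_eq_of_lt hlt
      · right
        refine ⟨by omega, ?_⟩
        rw [show i.val + 1 = n by omega, Nat.mod_self]
    · intro hcase
      apply ZMod.val_injective
      rw [ZMod.val_add, ZMod.val_one_eq_one_mod, Nat.mod_eq_of_lt (show 1 < n by omega)]
      rcases hcase with h | ⟨h1, h2⟩
      · rw [h, Nat.mod_eq_of_lt (by omega)]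
      · rw [h2, h1, show n - 1 + 1 = n by omega, Nat.mod_self]
  set hfun : ZMod n → V := fun i => if i = 0 then x else f (a + ((i.val - 1 : ℕ) : ZMod ℓ))
    with hfun_def
  have hv0 : (0 : ZMod n).val = 0 := (ZMod.val_eq_zero _).mpr rfl
  refine ⟨n, hfun, f (a + ((g1 + 1 : ℕ) : ZMod ℓ)), ⟨by omega, ?_, ?_⟩, ?_, ?_⟩
  · -- injectivity
    intro i j hij
    simp only [hfun_def] at hij
    by_cases hi0 : i = 0 <;> by_cases hj0 : j = 0
    · rw [hi0, hj0]
    · rw [if_pos hi0, if_neg hj0] at hij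
      exact absurd ⟨_, hij.symm⟩ hx
    · rw [if_neg hi0, if_pos hj0] at hij
      exact absurd ⟨_, hij⟩ hx
    · rw [if_neg hi0, if_neg hj0] at hij
      have hiv : i.val ≠ 0 := fun hcc => hi0 ((ZMod.val_eq_zero i).mp hcc)
      have hjv : j.val ≠ 0 := fun hcc => hj0 ((ZMod.val_eq_zero j).mp hcc)
      have hi := ZMod.val_lt i
      have hj := ZMod.val_lt j
      have h2 := (addCastInj a (show i.val - 1 < ℓ by omega)
        (show j.val - 1 < ℓ by omega)).mp (hfinj hij)
      apply ZMod.val_injective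
      omega
  · -- hole adjacency
    intro i j
    have hi := ZMod.val_lt i
    have hj := ZMod.val_lt j
    by_cases hi0 : i = 0 <;> by_cases hj0 : j = 0
    · subst hi0; subst hj0
      simp only [hfun_def]
      rw [if_true]
      constructor
      · intro had; exact absurd rfl had.ne
      · rintro (hc | hc) <;>
          (rw [vadd1] at hc; simp only [hv0, and_true, true_and] at hc; exact absurd hc (by omega))
    · subst hi0
      have hjv : j.val ≠ 0 := fun hcc => hj0 ((ZMod.val_eq_zero j).mp hcc)
      simp only [hfun_def]
      rw [if_true, if_neg hj0]
      rw [xadj (j.val - 1) (by omega), vadd1 0 j, vadd1 j 0]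
      simp only [hv0, and_true, true_and]
      omega
    · subst hj0
      have hiv : i.val ≠ 0 := fun hcc => hi0 ((ZMod.val_eq_zero i).mp hcc)
      simp only [hfun_def]
      rw [if_neg hi0, if_true]
      rw [SimpleGraph.adj_comm]
      rw [xadj (i.val - 1) (by omega), vadd1 i 0, vadd1 0 i]
      simp only [hv0, and_true, true_and]
      omega
    · have hiv : i.val ≠ 0 := fun hcc => hi0 ((ZMod.val_eq_zero i).mp hcc)
      have hjv : j.val ≠ 0 := fun hcc => hj0 ((ZMod.val_eq_zero j).mp hcc)
      simp only [hfun_def]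
      rw [if_neg hi0, if_neg hj0]
      rw [farc (i.val - 1) (j.val - 1) (by omega) (by omega), vadd1 i j, vadd1 j i]
      omega
  · -- pendant vertex not on the small hole
    rintro ⟨i, hi⟩
    simp only [hfun_def] at hi
    by_cases hi0 : i = 0
    · rw [if_pos hi0] at hi
      exact hx ⟨_, hi.symm⟩
    · rw [if_neg hi0] at hi
      have hiv : i.val ≠ 0 := fun hcc => hi0 ((ZMod.val_eq_zero i).mp hcc)
      have hilt := ZMod.val_lt i
      have h2 := (addCastInj a (show i.val - 1 < ℓ by omega)
        (show g1 + 1 < ℓ by omega)).mp (hfinj hi)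
      omega
  · -- exactly one neighbour on the small hole
    have yadj : ∀ i : ZMod n, G.Adj (f (a + ((g1 + 1 : ℕ) : ZMod ℓ))) (hfun i) ↔
        i.val = g1 + 1 := by
      intro i
      by_cases hi0 : i = 0
      · subst hi0
        simp only [hfun_def]
        rw [if_true]
        constructor
        · intro had
          have h2 := (xadj (g1 + 1) (by omega)).mp had.symm
          exact absurd h2 (by omega)
        · intro hv
          rw [hv0] at hv
          exact absurd hv (by omega)
      · have hiv : i.val ≠ 0 := fun hcc => hi0 ((ZMod.val_eq_zero i).mp hcc)
        have hilt := ZMod.val_lt i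
        simp only [hfun_def]
        rw [if_neg hi0]
        rw [farc (g1 + 1) (i.val - 1) (by omega) (by omega)]
        omega
    refine ⟨((g1 + 1 : ℕ) : ZMod n), (yadj _).mpr ?_, fun i hi => ?_⟩
    · rw [ZMod.val_cast_of_lt (show g1 + 1 < n by omega)]
    · have h1 := (yadj i).mp hi
      apply ZMod.val_injective
      rw [h1, ZMod.val_cast_of_lt (show g1 + 1 < n by omega)]

lemma main_aux {V : Type*} (G : SimpleGraph V) (ℓ : ℕ) (f : ZMod ℓ → V)
    (hC : IsHole G ℓ f) (hℓ : 5 ≤ ℓ) (x : V) (hx : x ∉ Set.range f)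
    (a b c : ZMod ℓ) (hab : a ≠ b) (hac : a ≠ c) (hbc : b ≠ c)
    (hset : {j : ZMod ℓ | G.Adj x (f j)} = {a, b, c})
    (hord : (b - a).val + (c - b).val + (a - c).val = ℓ) :
    (∃ i : ZMod ℓ, {j : ZMod ℓ | G.Adj x (f j)} = {i - 1, i, i + 1}) ∨ HasInducedPan G := by
  haveI : NeZero ℓ := ⟨by omega⟩
  have hb : b = a + (((b - a).val : ℕ) : ZMod ℓ) := by rw [val_cast_self]; ring
  have hcb : c = b + (((c - b).val : ℕ) : ZMod ℓ) := by rw [val_cast_self]; ring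
  have hac' : a = c + (((a - c).val : ℕ) : ZMod ℓ) := by rw [val_cast_self]; ring
  set g1 := (b - a).val with hg1d
  set g2 := (c - b).val with hg2d
  set g3 := (a - c).val with hg3d
  have hp1 : 0 < g1 := ZMod.val_pos.mpr (sub_ne_zero.mpr hab.symm)
  have hp2 : 0 < g2 := ZMod.val_pos.mpr (sub_ne_zero.mpr hbc.symm)
  have hp3 : 0 < g3 := ZMod.val_pos.mpr (sub_ne_zero.mpr hac)
  have hc : c = a + ((g1 + g2 : ℕ) : ZMod ℓ) := by
    rw [hcb, hb]; push_cast; ring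
  have hS : ∀ j, G.Adj x (f j) ↔
      (j = a ∨ j = a + (g1 : ZMod ℓ) ∨ j = a + ((g1 + g2 : ℕ) : ZMod ℓ)) := by
    intro j
    rw [Set.ext_iff] at hset
    have h' := hset j
    simp only [Set.mem_setOf_eq, Set.mem_insert_iff, Set.mem_singleton_iff] at h'
    rw [h', hb, hc]
  rcases (show (g1 = 1 ∧ g2 = 1) ∨ (g2 = 1 ∧ g3 = 1) ∨ (g3 = 1 ∧ g1 = 1)
      ∨ (2 ≤ g1 ∧ 2 ≤ g2) ∨ (2 ≤ g2 ∧ 2 ≤ g3) ∨ (2 ≤ g3 ∧ 2 ≤ g1) by omega) with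
    h | h | h | h | h | h
  · -- consecutive, centre b
    obtain ⟨e1, e2⟩ := h
    have hb' : b = a + 1 := by rw [hb, e1, Nat.cast_one]
    have hc' : c = b + 1 := by rw [hcb, e2, Nat.cast_one]
    have ea : a = b - 1 := by rw [hb']; ring
    left
    exact ⟨b, by rw [hset, ea, hc']⟩
  · -- consecutive, centre c
    obtain ⟨e2, e3⟩ := h
    have hc' : c = b + 1 := by rw [hcb, e2, Nat.cast_one]
    have ha' : a = c + 1 := by rw [hac', e3, Nat.cast_one]
    have eb : b = c - 1 := by rw [hc']; ring
    left
    refine ⟨c, ?_⟩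
    rw [hset]
    ext j
    simp only [Set.mem_insert_iff, Set.mem_singleton_iff]
    rw [ha', eb]
    tauto
  · -- consecutive, centre a
    obtain ⟨e3, e1⟩ := h
    have ha' : a = c + 1 := by rw [hac', e3, Nat.cast_one]
    have hb' : b = a + 1 := by rw [hb, e1, Nat.cast_one]
    have ec : c = a - 1 := by rw [ha']; ring
    left
    refine ⟨a, ?_⟩
    rw [hset]
    ext j
    simp only [Set.mem_insert_iff, Set.mem_singleton_iff]
    rw [hb', ec]
    tauto
  · -- pan based at a
    exact Or.inr (core_pan G ℓ f hC x hx a g1 g2 g3 h.1 h.2 hp3 hord hS)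
  · -- pan based at b
    right
    have hz : (g1 : ZMod ℓ) + g2 + g3 = 0 := by
      have h0 := congrArg (fun m : ℕ => (m : ZMod ℓ)) hord
      push_cast at h0
      rw [ZMod.natCast_self] at h0
      exact h0
    have q1 : b + (g2 : ZMod ℓ) = a + ((g1 + g2 : ℕ) : ZMod ℓ) := by
      rw [hb]; push_cast; ring
    have q2 : b + ((g2 + g3 : ℕ) : ZMod ℓ) = a := by
      rw [hb]; push_cast; linear_combination hz
    have hS_b : ∀ j, G.Adj x (f j) ↔
        (j = b ∨ j = b + (g2 : ZMod ℓ) ∨ j = b + ((g2 + g3 : ℕ) : ZMod ℓ)) := by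
      intro j
      rw [hS j, q1, q2, hb]
      tauto
    exact core_pan G ℓ f hC x hx b g2 g3 g1 h.1 h.2 (by omega) (by omega) hS_b
  · -- pan based at c
    right
    have r1 : c + (g3 : ZMod ℓ) = a := hac'.symm
    have r2 : c + ((g3 + g1 : ℕ) : ZMod ℓ) = a + (g1 : ZMod ℓ) := by
      rw [hac']; push_cast; ring
    have hS_c : ∀ j, G.Adj x (f j) ↔
        (j = c ∨ j = c + (g3 : ZMod ℓ) ∨ j = c + ((g3 + g1 : ℕ) : ZMod ℓ)) := by
      intro j
      rw [hS j, r1, r2, hc]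
      tauto
    exact core_pan G ℓ f hC x hx c g3 g1 g2 h.1 h.2 (by omega) (by omega) hS_c

theorem stmt_1 {V : Type*} (G : SimpleGraph V) (hpan : ¬ HasInducedPan G)
    (ℓ : ℕ) (f : ZMod ℓ → V) (hC : IsHole G ℓ f) (hℓ : 5 ≤ ℓ)
    (x : V) (hx : x ∉ Set.range f)
    (h3 : ({j : ZMod ℓ | G.Adj x (f j)}).ncard = 3) :
    ∃ i : ZMod ℓ, {j : ZMod ℓ | G.Adj x (f j)} = {i - 1, i, i + 1} := by
  haveI : NeZero ℓ := ⟨by omega⟩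
  obtain ⟨a, b, c, hab, hac, hbc, hset⟩ := Set.ncard_eq_three.mp h3
  have hd1 := triple_dvd a b c
  have hp1 : 0 < (b - a).val := ZMod.val_pos.mpr (sub_ne_zero.mpr hab.symm)
  have hp2 : 0 < (c - b).val := ZMod.val_pos.mpr (sub_ne_zero.mpr hbc.symm)
  have hp3 : 0 < (a - c).val := ZMod.val_pos.mpr (sub_ne_zero.mpr hac)
  have hl1 := ZMod.val_lt (b - a)
  have hl2 := ZMod.val_lt (c - b)
  have hl3 := ZMod.val_lt (a - c)
  have hq1 := pair_val_sum hab
  have hq2 := pair_val_sum hbc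
  have hq3 := pair_val_sum hac.symm
  rcases dvd_small hd1 (by omega) (by omega) with h1 | h1
  · rcases main_aux G ℓ f hC hℓ x hx a b c hab hac hbc hset h1 with h | h
    · exact h
    · exact absurd h hpan
  · have hset' : {j : ZMod ℓ | G.Adj x (f j)} = {a, c, b} := by
      rw [hset]
      ext j
      simp only [Set.mem_insert_iff, Set.mem_singleton_iff]
      tauto
    have h2 : (c - a).val + (b - c).val + (a - b).val = ℓ := by omega
    rcases main_aux G ℓ f hC hℓ x hx a c b hac hab hbc.symm hset' h2 with h | h
    · exact h
    · exact absurd h hpan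
end

section
/- Let G be a pan-free graph, C a hole in G of length at least five, and x a vertex outside C with exactly four neighbors on C. Then G contains an even hole (an induced cycle of even length at least four). -/
private lemma castinj_s2 {ℓ u v : ℕ} (hu : u < ℓ) (hv : v < ℓ)
    (h : (u : ZMod ℓ) = (v : ZMod ℓ)) : u = v := by
  haveI : NeZero ℓ := ⟨by omega⟩
  have h2 := congrArg ZMod.val h
  rwa [ZMod.val_cast_of_lt hu, ZMod.val_cast_of_lt hv] at h2

private lemma build_hole {V : Type*} (G : SimpleGraph V) (ℓ : ℕ) (f : ZMod ℓ → V)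
    (hC : IsHole G ℓ f) (x : V) (hx : x ∉ Set.range f)
    (a g : ℕ) (hg2 : 2 ≤ g) (hgℓ : g + 2 ≤ ℓ) (hge : Even g)
    (hadj0 : G.Adj x (f (a : ℕ)))
    (hadjg : G.Adj x (f ((a + g : ℕ))))
    (hmid : ∀ k : ℕ, 0 < k → k < g → ¬ G.Adj x (f ((a + k : ℕ)))) :
    HasEvenHole G := by
  obtain ⟨-, hfinj, hfadj⟩ := hC
  set n := g + 2 with hn
  haveI : NeZero n := ⟨by omega⟩
  haveI : Fact (1 < n) := ⟨by omega⟩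
  -- the arc adjacency facts
  have hxarc : ∀ m : ℕ, m ≤ g → (G.Adj x (f ((a + m : ℕ))) ↔ m = 0 ∨ m = g) := by
    intro m hm
    constructor
    · intro h
      by_contra hc
      push_neg at hc
      exact hmid m (by omega) (by omega) h
    · rintro (rfl | rfl)
      · simpa using hadj0
      · exact hadjg
  have harc : ∀ u v : ℕ, u ≤ g → v ≤ g →
      (G.Adj (f ((a + u : ℕ))) (f ((a + v : ℕ))) ↔ v = u + 1 ∨ u = v + 1) := by
    intro u v hu hv
    rw [hfadj]
    constructor
    · rintro (h | h)
      · left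
        push_cast at h
        have h2 : ((v : ZMod ℓ)) = ((u + 1 : ℕ) : ZMod ℓ) := by
          push_cast
          linear_combination h
        exact castinj_s2 (by omega) (by omega) h2
      · right
        push_cast at h
        have h2 : ((u : ZMod ℓ)) = ((v + 1 : ℕ) : ZMod ℓ) := by
          push_cast
          linear_combination h
        exact castinj_s2 (by omega) (by omega) h2
    · rintro (rfl | rfl)
      · left; push_cast; ring
      · right; push_cast; ring
  refine ⟨n, fun i => if i.val = 0 then x else f ((a + (i.val - 1) : ℕ)),
    ⟨by omega, ?_, ?_⟩, ?_⟩
  · -- injectivity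
    intro i j hij
    dsimp only at hij
    have hin : i.val < n := ZMod.val_lt i
    have hjn : j.val < n := ZMod.val_lt j
    by_cases hi : i.val = 0 <;> by_cases hj : j.val = 0
    · exact ZMod.val_injective n (hi.trans hj.symm)
    · rw [if_pos hi, if_neg hj] at hij
      exact absurd ⟨_, hij.symm⟩ hx
    · rw [if_neg hi, if_pos hj] at hij
      exact absurd ⟨_, hij⟩ hx
    · rw [if_neg hi, if_neg hj] at hij
      have h1 := hfinj hij
      push_cast at h1
      have h2 := add_left_cancel h1
      have h2' : (((i.val - 1 : ℕ)) : ZMod ℓ) = (((j.val - 1 : ℕ)) : ZMod ℓ) := by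
        exact_mod_cast h2
      have h3 : i.val - 1 = j.val - 1 := castinj_s2 (by omega) (by omega) h2'
      have h4 : i.val = j.val := by omega
      exact ZMod.val_injective n h4
  · -- adjacency
    intro i j
    dsimp only
    have hin : i.val < n := ZMod.val_lt i
    have hjn : j.val < n := ZMod.val_lt j
    have hiff : ∀ z w : ZMod n, w = z + 1 ↔ w.val = (z.val + 1) % n := by
      intro z w
      constructor
      · rintro rfl
        rw [ZMod.val_add, ZMod.val_one]
      · intro h
        exact ZMod.val_injective n (by rw [h, ZMod.val_add, ZMod.val_one])
    rw [hiff i j, hiff j i]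
    have hmodi : (i.val + 1) % n = if i.val + 1 = n then 0 else i.val + 1 := by
      split_ifs with h
      · simp [h]
      · exact Nat.mod_eq_of_lt (by omega)
    have hmodj : (j.val + 1) % n = if j.val + 1 = n then 0 else j.val + 1 := by
      split_ifs with h
      · simp [h]
      · exact Nat.mod_eq_of_lt (by omega)
    rw [hmodi, hmodj]
    by_cases hi : i.val = 0 <;> by_cases hj : j.val = 0
    · rw [if_pos hi, if_pos hj]
      constructor
      · intro h; exact absurd h (G.irrefl)
      · intro h
        exfalso
        rcases h with h | h <;> split_ifs at h <;> omega
    · rw [if_pos hi, if_neg hj]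
      rw [hxarc (j.val - 1) (by omega)]
      constructor
      · intro h; rcases h with h | h <;> split_ifs <;> omega
      · intro h; rcases h with h | h <;> split_ifs at h <;> omega
    · rw [if_neg hi, if_pos hj]
      rw [G.adj_comm]
      rw [hxarc (i.val - 1) (by omega)]
      constructor
      · intro h; rcases h with h | h <;> split_ifs <;> omega
      · intro h; rcases h with h | h <;> split_ifs at h <;> omega
    · rw [if_neg hi, if_neg hj]
      rw [harc (i.val - 1) (j.val - 1) (by omega) (by omega)]
      constructor
      · intro h; rcases h with h | h <;> split_ifs <;> omega
      · intro h; rcases h with h | h <;> split_ifs at h <;> omega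
  · -- even
    rw [Nat.even_iff] at hge ⊢
    omega

theorem stmt_2 {V : Type*} (G : SimpleGraph V) (hpan : ¬ HasInducedPan G)
    (ℓ : ℕ) (f : ZMod ℓ → V) (hC : IsHole G ℓ f) (hℓ : 5 ≤ ℓ)
    (x : V) (hx : x ∉ Set.range f)
    (h4 : ({j : ZMod ℓ | G.Adj x (f j)}).ncard = 4) :
    HasEvenHole G := by
  rcases Nat.even_or_odd ℓ with he | ho
  · exact ⟨ℓ, f, hC, he⟩
  haveI : NeZero ℓ := ⟨by omega⟩
  classical
  have hfin : {j : ZMod ℓ | G.Adj x (f j)}.Finite := Set.toFinite _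
  set T : Finset ℕ := hfin.toFinset.image ZMod.val with hT
  have hTmem : ∀ u : ℕ, u ∈ T ↔ u < ℓ ∧ G.Adj x (f (u : ℕ)) := by
    intro u
    simp only [hT, Finset.mem_image, Set.Finite.mem_toFinset, Set.mem_setOf_eq]
    constructor
    · rintro ⟨z, hz, rfl⟩
      refine ⟨ZMod.val_lt z, ?_⟩
      rwa [show ((z.val : ℕ) : ZMod ℓ) = z from
        ZMod.val_injective ℓ (ZMod.val_cast_of_lt (ZMod.val_lt z))]
    · rintro ⟨hu, hadj⟩
      exact ⟨(u : ZMod ℓ), hadj, ZMod.val_cast_of_lt hu⟩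
  have hTcard : T.card = 4 := by
    rw [hT, Finset.card_image_of_injective _ (ZMod.val_injective ℓ),
      ← Set.ncard_eq_toFinset_card _ hfin, h4]
  set e := T.orderIsoOfFin hTcard with he'
  set A : ℕ := (e 0 : ℕ) with hA'
  set B : ℕ := (e 1 : ℕ) with hB'
  set C : ℕ := (e 2 : ℕ) with hC'
  set D : ℕ := (e 3 : ℕ) with hD'
  have hAB : A < B := e.strictMono (show (0 : Fin 4) < 1 by decide)
  have hBC : B < C := e.strictMono (show (1 : Fin 4) < 2 by decide)
  have hCD : C < D := e.strictMono (show (2 : Fin 4) < 3 by decide)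
  have hAmem : A ∈ T := (e 0).2
  have hBmem : B ∈ T := (e 1).2
  have hCmem : C ∈ T := (e 2).2
  have hDmem : D ∈ T := (e 3).2
  have hcov : ∀ u, u ∈ T → u = A ∨ u = B ∨ u = C ∨ u = D := by
    intro u hu
    obtain ⟨k, hk⟩ := e.surjective ⟨u, hu⟩
    have hk' : u = (e k : ℕ) := by rw [hk]
    fin_cases k
    · exact Or.inl hk'
    · exact Or.inr (Or.inl hk')
    · exact Or.inr (Or.inr (Or.inl hk'))
    · exact Or.inr (Or.inr (Or.inr hk'))
  have hDℓ : D < ℓ := ((hTmem D).1 hDmem).1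
  have hadjA : G.Adj x (f (A : ℕ)) := ((hTmem A).1 hAmem).2
  have hadjB : G.Adj x (f (B : ℕ)) := ((hTmem B).1 hBmem).2
  have hadjC : G.Adj x (f (C : ℕ)) := ((hTmem C).1 hCmem).2
  have hadjD : G.Adj x (f (D : ℕ)) := ((hTmem D).1 hDmem).2
  rw [Nat.odd_iff] at ho
  have hparity : Even (B - A) ∨ Even (C - B) ∨ Even (D - C) ∨ Even (ℓ - D + A) := by
    simp only [Nat.even_iff]
    omega
  -- a generic middle-vertex exclusion for the three inner gaps
  have hmid3 : ∀ p q : ℕ, p ∈ T → q ∈ T →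
      (∀ r, r ∈ T → r ≤ p ∨ q ≤ r) → p < q → q < ℓ →
      ∀ k : ℕ, 0 < k → k < q - p → ¬ G.Adj x (f ((p + k : ℕ))) := by
    intro p q _ _ hbetween hpq hqℓ k hk1 hk2 hadj
    have hmem : p + k ∈ T := (hTmem _).2 ⟨by omega, hadj⟩
    rcases hbetween _ hmem with h | h <;> omega
  rcases hparity with hev | hev | hev | hev
  · refine build_hole G ℓ f ⟨by omega, (hC).2.1, (hC).2.2⟩ x hx A (B - A)
      ?_ (by omega) hev ?_ ?_ ?_
    · rw [Nat.even_iff] at hev; omega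
    · exact hadjA
    · rw [show A + (B - A) = B by omega]; exact hadjB
    · refine hmid3 A B hAmem hBmem ?_ hAB (by omega)
      intro r hr; rcases hcov r hr with rfl | rfl | rfl | rfl <;> omega
  · refine build_hole G ℓ f ⟨by omega, (hC).2.1, (hC).2.2⟩ x hx B (C - B)
      ?_ (by omega) hev ?_ ?_ ?_
    · rw [Nat.even_iff] at hev; omega
    · exact hadjB
    · rw [show B + (C - B) = C by omega]; exact hadjC
    · refine hmid3 B C hBmem hCmem ?_ hBC (by omega)
      intro r hr; rcases hcov r hr with rfl | rfl | rfl | rfl <;> omega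
  · refine build_hole G ℓ f ⟨by omega, (hC).2.1, (hC).2.2⟩ x hx C (D - C)
      ?_ (by omega) hev ?_ ?_ ?_
    · rw [Nat.even_iff] at hev; omega
    · exact hadjC
    · rw [show C + (D - C) = D by omega]; exact hadjD
    · refine hmid3 C D hCmem hDmem ?_ hCD (by omega)
      intro r hr; rcases hcov r hr with rfl | rfl | rfl | rfl <;> omega
  · refine build_hole G ℓ f ⟨by omega, (hC).2.1, (hC).2.2⟩ x hx D (ℓ - D + A)
      ?_ (by omega) hev ?_ ?_ ?_
    · rw [Nat.even_iff] at hev; omega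
    · exact hadjD
    · have hc1 : ((D + (ℓ - D + A) : ℕ) : ZMod ℓ) = ((ℓ + A : ℕ) : ZMod ℓ) := by
        congr 1; omega
      have hc2 : ((ℓ + A : ℕ) : ZMod ℓ) = ((A : ℕ) : ZMod ℓ) := by
        rw [Nat.cast_add, ZMod.natCast_self, zero_add]
      rw [hc1.trans hc2]
      exact hadjA
    · intro k hk1 hk2 hadj
      rcases Nat.lt_or_ge (D + k) ℓ with hcase | hcase
      · have hmem : D + k ∈ T := (hTmem _).2 ⟨hcase, hadj⟩
        rcases hcov _ hmem with h | h | h | h <;> omega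
      · have hc1 : ((D + k : ℕ) : ZMod ℓ) = ((ℓ + (D + k - ℓ) : ℕ) : ZMod ℓ) :=
          congrArg Nat.cast (by omega)
        have hc2 : ((ℓ + (D + k - ℓ) : ℕ) : ZMod ℓ) = ((D + k - ℓ : ℕ) : ZMod ℓ) := by
          rw [Nat.cast_add, ZMod.natCast_self, zero_add]
        have hc := hc1.trans hc2
        rw [hc] at hadj
        have hmem : D + k - ℓ ∈ T := (hTmem _).2 ⟨by omega, hadj⟩
        rcases hcov _ hmem with h | h | h | h <;> omega
end

section
/- Let G be a pan-free graph, C a hole in G of length at least five, and x a vertex outside C with at least five neighbors on C. Then x is adjacent to every vertex of C. -/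
/-!
Suppose `x` misses the vertex `f j₀` of the hole. Walking around the hole from `j₀` in both
directions up to the first neighbours of `x` gives an arc `f p, …, f (p + d)` with `d ≥ 2` whose
only neighbours of `x` are its two ends, so the arc closed up by `x` is a hole of length `d + 2`.
The at least five neighbours of `x` lie among the `ℓ + 1 - d` vertices off the gap, so
`d ≤ ℓ - 4`; and at most four of them lie within distance one of the arc, so a fifth one, `f r`,
has `x` as its only neighbour on the new hole: an induced pan.
-/

namespace ZMod

theorem natCast_inj_of_lt {n a b : ℕ} (ha : a < n) (hb : b < n) :
    (a : ZMod n) = b ↔ a = b := by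
  rw [natCast_eq_natCast_iff', Nat.mod_eq_of_lt ha, Nat.mod_eq_of_lt hb]

theorem eq_add_one_iff_val {n : ℕ} [NeZero n] (hn : 2 ≤ n) (i j : ZMod n) :
    j = i + 1 ↔ j.val = i.val + 1 ∨ (i.val + 1 = n ∧ j.val = 0) := by
  rw [← (val_injective n).eq_iff, val_add, val_one_eq_one_mod, Nat.mod_eq_of_lt hn]
  have := j.val_lt
  rcases Nat.lt_or_ge (i.val + 1) n with h | h
  · rw [Nat.mod_eq_of_lt h]; omega
  · rw [show i.val + 1 = n by have := i.val_lt; omega, Nat.mod_self]; omega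

theorem exists_gap {ℓ : ℕ} [NeZero ℓ] {N : Set (ZMod ℓ)} {j₀ : ZMod ℓ} (hj₀ : j₀ ∉ N)
    (hN : N.Nonempty) :
    ∃ p ∈ N, ∃ d : ℕ, 2 ≤ d ∧ d ≤ ℓ ∧ p + d ∈ N ∧ ∀ u : ℕ, 0 < u → u < d → p + u ∉ N := by
  classical
  have hs : ∃ s : ℕ, j₀ - s ∈ N := by
    obtain ⟨j, hj⟩ := hN
    exact ⟨(j₀ - j).val, by rwa [natCast_zmod_val, sub_sub_cancel]⟩
  set s := Nat.find hs
  have hsN : j₀ - s ∈ N := Nat.find_spec hs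
  have hs0 : 0 < s := Nat.pos_of_ne_zero fun h => hj₀ (by rwa [h, Nat.cast_zero, sub_zero] at hsN)
  have hd : ∃ d : ℕ, 0 < d ∧ j₀ - s + d ∈ N :=
    ⟨ℓ, NeZero.pos ℓ, by rwa [natCast_self, add_zero]⟩
  set d := Nat.find hd
  have hsd : s < d := by
    by_contra! hds
    obtain ⟨hd0, hdN⟩ := Nat.find_spec hd
    refine Nat.find_min hs (m := s - d) (by omega) ?_
    convert hdN using 1
    push_cast [Nat.cast_sub hds]
    ring
  refine ⟨j₀ - s, hsN, d, by omega, Nat.find_min' hd ⟨NeZero.pos ℓ, ?_⟩,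
    (Nat.find_spec hd).2, fun u hu hud hN => Nat.find_min hd hud ⟨hu, hN⟩⟩
  rwa [natCast_self, add_zero]

theorem ncard_le_of_gap {ℓ : ℕ} [NeZero ℓ] {N : Set (ZMod ℓ)} {p : ZMod ℓ} {d : ℕ} (hd : d ≤ ℓ)
    (hgap : ∀ u : ℕ, 0 < u → u < d → p + u ∉ N) : N.ncard ≤ ℓ + 1 - d := by
  have hsub : N ⊆ (Finset.Icc d ℓ).image (fun v : ℕ => p + v) := by
    intro j hj
    have hj' : p + (j - p).val = j := by rw [natCast_zmod_val, add_sub_cancel]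
    simp only [Finset.coe_image, Finset.coe_Icc, Set.mem_image, Set.mem_Icc]
    rcases Nat.eq_zero_or_pos (j - p).val with h0 | h0
    · refine ⟨ℓ, ⟨hd, le_rfl⟩, ?_⟩
      rw [natCast_self, ← hj', h0, Nat.cast_zero]
    · refine ⟨(j - p).val, ⟨?_, (val_lt _).le⟩, hj'⟩
      by_contra! hlt
      exact hgap _ h0 hlt (by rwa [hj'])
  calc N.ncard ≤ ((Finset.Icc d ℓ).image (fun v : ℕ => p + v)).card := by
        rw [← Set.ncard_coe_finset]; exact Set.ncard_le_ncard hsub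
    _ ≤ (Finset.Icc d ℓ).card := Finset.card_image_le
    _ = ℓ + 1 - d := Nat.card_Icc d ℓ

theorem exists_mem_off_gap {ℓ : ℕ} {N : Set (ZMod ℓ)} (hN : 5 ≤ N.ncard) {p : ZMod ℓ} {d : ℕ}
    (hgap : ∀ u : ℕ, 0 < u → u < d → p + u ∉ N) :
    ∃ r ∈ N, ∀ b : ℕ, b ≤ d + 2 → r ≠ p - 1 + b := by
  obtain ⟨r, hr, hr4⟩ := Set.exists_mem_notMem_of_ncard_lt_ncard
    (s := ↑({p - 1, p, p + d, p + d + 1} : Finset (ZMod ℓ))) (t := N)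
    (by rw [Set.ncard_coe_finset]; exact Finset.card_le_four.trans_lt hN)
  refine ⟨r, hr, fun b hb hrb => ?_⟩
  subst hrb
  simp only [Finset.coe_insert, Finset.coe_singleton, Set.mem_insert_iff,
    Set.mem_singleton_iff, not_or] at hr4
  obtain ⟨h0, h1, h2, h3⟩ := hr4
  obtain rfl | rfl | rfl | rfl | ⟨hb2, hbd⟩ : b = 0 ∨ b = 1 ∨ b = d + 1 ∨ b = d + 2 ∨ 2 ≤ b ∧ b ≤ d :=
    by omega
  · exact h0 (by simp)
  · exact h1 (by simp)
  · exact h2 (by push_cast; ring)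
  · exact h3 (by push_cast; ring)
  · refine hgap (b - 1) (by omega) (by omega) ?_
    convert hr using 1
    push_cast [Nat.cast_sub (by omega : 1 ≤ b)]
    ring

end ZMod

section Hole

variable {V : Type*} {G : SimpleGraph V}

theorem isHole_of_cyclic {n : ℕ} (hn : 4 ≤ n) (Q : ℕ → V) (hinj : Set.InjOn Q (Set.Iio n))
    (hadj : ∀ a b : ℕ, a < n → b < n → (G.Adj (Q a) (Q b) ↔
      b = a + 1 ∨ a = b + 1 ∨ (a + 1 = n ∧ b = 0) ∨ (b + 1 = n ∧ a = 0))) :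
    IsHole G n (fun i => Q i.val) := by
  have : NeZero n := ⟨by omega⟩
  refine ⟨hn, fun i j h => ZMod.val_injective n (hinj i.val_lt j.val_lt h), fun i j => ?_⟩
  rw [hadj _ _ i.val_lt j.val_lt, ZMod.eq_add_one_iff_val (by omega),
    ZMod.eq_add_one_iff_val (by omega)]
  tauto

variable {ℓ : ℕ} {f : ZMod ℓ → V}

theorem IsHole.adj_add_natCast_iff (hC : IsHole G ℓ f) (p : ZMod ℓ) {a b : ℕ}
    (ha : a + 1 < ℓ) (hb : b + 1 < ℓ) :
    G.Adj (f (p + a)) (f (p + b)) ↔ b = a + 1 ∨ a = b + 1 := by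
  rw [hC.2.2, add_assoc, add_assoc, add_right_inj, add_right_inj, ← Nat.cast_succ,
    ← Nat.cast_succ, ZMod.natCast_inj_of_lt (by omega) ha, ZMod.natCast_inj_of_lt (by omega) hb]

def arcCycle (f : ZMod ℓ → V) (p : ZMod ℓ) (d : ℕ) (x : V) (a : ℕ) : V :=
  if a ≤ d then f (p + a) else x

variable {x : V} {p : ZMod ℓ} {d : ℕ}

theorem IsHole.isHole_arcCycle (hC : IsHole G ℓ f) (hx : x ∉ Set.range f) (hd : 2 ≤ d)
    (hdℓ : d + 1 < ℓ) (hp : G.Adj x (f p)) (hpd : G.Adj x (f (p + d)))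
    (hgap : ∀ u : ℕ, 0 < u → u < d → ¬ G.Adj x (f (p + u))) :
    IsHole G (d + 2) (fun i => arcCycle f p d x i.val) := by
  have hxarc : ∀ a ≤ d, G.Adj x (f (p + a)) ↔ a = 0 ∨ a = d := by
    intro a ha
    refine ⟨fun h => ?_, ?_⟩
    · by_contra! h'
      exact hgap a (by omega) (by omega) h
    · rintro (rfl | rfl)
      · simpa using hp
      · exact hpd
  apply isHole_of_cyclic (by omega)
  · intro a ha b hb hab
    simp only [Set.mem_Iio, arcCycle] at ha hb hab
    split_ifs at hab with h1 h2 h2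
    · exact (ZMod.natCast_inj_of_lt (by omega) (by omega)).1 (add_right_inj p |>.1 (hC.2.1 hab))
    · exact absurd ⟨_, hab⟩ hx
    · exact absurd ⟨_, hab.symm⟩ hx
    · omega
  · intro a b ha hb
    simp only [arcCycle]
    split_ifs with h1 h2 h2
    · rw [hC.adj_add_natCast_iff p (by omega) (by omega)]; omega
    · rw [G.adj_comm, hxarc a h1]; omega
    · rw [hxarc b h2]; omega
    · simp only [SimpleGraph.irrefl, false_iff]; omega

theorem IsHole.hasInducedPan_of_arc (hC : IsHole G ℓ f) (hx : x ∉ Set.range f) (hd : 2 ≤ d)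
    (hdℓ : d + 1 < ℓ) (hp : G.Adj x (f p)) (hpd : G.Adj x (f (p + d)))
    (hgap : ∀ u : ℕ, 0 < u → u < d → ¬ G.Adj x (f (p + u))) {r : ZMod ℓ} (hr : G.Adj x (f r))
    (hr_off : ∀ b : ℕ, b ≤ d + 2 → r ≠ p - 1 + b) : HasInducedPan G := by
  have hlast : (((d + 1 : ℕ) : ZMod (d + 2))).val = d + 1 := ZMod.val_cast_of_lt (by omega)
  refine ⟨d + 2, _, f r, hC.isHole_arcCycle hx hd hdℓ hp hpd hgap, ?_, (d + 1 : ℕ), ?_, ?_⟩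
  · rintro ⟨i, hi⟩
    simp only [arcCycle] at hi
    split_ifs at hi with h
    · exact hr_off (i.val + 1) (by omega) (by rw [← hC.2.1 hi]; push_cast; ring)
    · exact hx ⟨r, hi.symm⟩
  · show G.Adj (f r) (arcCycle f p d x _)
    rw [arcCycle, hlast, if_neg (by omega)]
    exact hr.symm
  · intro i hi
    simp only [arcCycle] at hi
    split_ifs at hi with h
    · rw [hC.2.2] at hi
      rcases hi with h' | h'
      · exact absurd (by linear_combination -h') (hr_off i.val (by omega))
      · exact absurd (by rw [h']; push_cast; ring) (hr_off (i.val + 2) (by omega))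
    · apply ZMod.val_injective
      rw [hlast]
      have := i.val_lt
      omega

end Hole

theorem stmt_3_general {V : Type*} (G : SimpleGraph V) (hpan : ¬ HasInducedPan G)
    (ℓ : ℕ) (f : ZMod ℓ → V) (hC : IsHole G ℓ f)
    (x : V) (hx : x ∉ Set.range f)
    (h5 : 5 ≤ ({j : ZMod ℓ | G.Adj x (f j)}).ncard) :
    ∀ j : ZMod ℓ, G.Adj x (f j) := by
  by_contra! ⟨j₀, hj₀⟩
  have : NeZero ℓ := ⟨by have := hC.1; omega⟩
  set N := {j : ZMod ℓ | G.Adj x (f j)}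
  obtain ⟨p, hp, d, hd, hdℓ, hpd, hgap⟩ :=
    ZMod.exists_gap (N := N) hj₀ (Set.nonempty_of_ncard_ne_zero (by omega))
  have hd4 : d + 4 ≤ ℓ := by have := ZMod.ncard_le_of_gap hdℓ hgap; omega
  obtain ⟨r, hr, hr_off⟩ := ZMod.exists_mem_off_gap h5 hgap
  exact hpan (hC.hasInducedPan_of_arc hx hd (by omega) hp hpd hgap hr hr_off)

theorem stmt_3 {V : Type*} (G : SimpleGraph V) (hpan : ¬ HasInducedPan G)
    (ℓ : ℕ) (f : ZMod ℓ → V) (hC : IsHole G ℓ f) (hℓ : 5 ≤ ℓ)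
    (x : V) (hx : x ∉ Set.range f)
    (h5 : 5 ≤ ({j : ZMod ℓ | G.Adj x (f j)}).ncard) :
    ∀ j : ZMod ℓ, G.Adj x (f j) :=
  stmt_3_general G hpan ℓ f hC x hx h5
end

section
/- Let G be a (pan, even hole)-free graph, C a hole in G of length ℓ ≥ 5, and x a vertex outside C with at least one neighbor on C. Then x has exactly 2, exactly 3, or exactly ℓ neighbors on C. -/
lemma mod_small {n a : ℕ} (h : a ≤ n) : a % n = if a = n then 0 else a := by
  split
  · simp [*]
  · exact Nat.mod_eq_of_lt (by omega)

lemma natCast_inj_of_lt {ℓ : ℕ} [NeZero ℓ] {p q : ℕ} (hp : p < ℓ) (hq : q < ℓ)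
    (h : (p : ZMod ℓ) = q) : p = q := by
  have := congrArg ZMod.val h
  rwa [ZMod.val_natCast, ZMod.val_natCast, Nat.mod_eq_of_lt hp, Nat.mod_eq_of_lt hq] at this

lemma offset_inj {ℓ : ℕ} [NeZero ℓ] {a : ZMod ℓ} {p q : ℕ} (hp : p < ℓ) (hq : q < ℓ)
    (h : a + (p : ZMod ℓ) = a + q) : p = q :=
  natCast_inj_of_lt hp hq (by exact add_left_cancel h)

lemma zmod_eq_add_one_iff {n : ℕ} (hn : 2 ≤ n) (u v : ZMod n) :
    v = u + 1 ↔ v.val = (u.val + 1) % n := by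
  haveI : NeZero n := ⟨by omega⟩
  have h1 : (u + 1).val = (u.val + 1) % n := by
    rw [ZMod.val_add, ZMod.val_one_eq_one_mod]
    conv_rhs => rw [Nat.add_mod]
    rw [Nat.mod_eq_of_lt (ZMod.val_lt u)]
  constructor
  · rintro rfl; exact h1
  · intro h; exact ZMod.val_injective n (h.trans h1.symm)

lemma exists_rep {ℓ : ℕ} [NeZero ℓ] (a c : ZMod ℓ) : ∃ m : ℕ, m < ℓ ∧ c = a + (m : ZMod ℓ) := by
  refine ⟨(c - a).val, ZMod.val_lt _, ?_⟩
  have h : (((c - a).val : ℕ) : ZMod ℓ) = c - a :=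
    ZMod.val_injective ℓ (ZMod.val_cast_of_lt (ZMod.val_lt _))
  rw [h]; ring

lemma ncard_triple_le {α : Type*} (a b c : α) : ({a, b, c} : Set α).ncard ≤ 3 := by
  have h0 := Set.ncard_insert_le a ({b, c} : Set α)
  have h1 := Set.ncard_insert_le b ({c} : Set α)
  rw [Set.ncard_singleton] at h1
  omega

lemma ncard_quad_le {α : Type*} (a b c d : α) : ({a, b, c, d} : Set α).ncard ≤ 4 := by
  have h0 := Set.ncard_insert_le a ({b, c, d} : Set α)
  have h1 := ncard_triple_le b c d
  omega

lemma seg_hole {V : Type*} {G : SimpleGraph V} {ℓ : ℕ} {f : ZMod ℓ → V}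
    (hC : IsHole G ℓ f) (hℓ : 5 ≤ ℓ) {x : V} (hx : x ∉ Set.range f)
    (a : ZMod ℓ) (g : ℕ) (hg2 : 2 ≤ g) (hgl : g ≤ ℓ - 2)
    (ha : G.Adj x (f a)) (hb : G.Adj x (f (a + (g : ZMod ℓ))))
    (hint : ∀ k : ℕ, 0 < k → k < g → ¬ G.Adj x (f (a + (k : ZMod ℓ)))) :
    IsHole G (g + 2)
      (fun j : ZMod (g + 2) => if j.val = 0 then x else f (a + ((j.val - 1 : ℕ) : ZMod ℓ))) := by
  haveI : NeZero ℓ := ⟨by omega⟩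
  haveI : NeZero (g + 2) := ⟨by omega⟩
  have hxadj : ∀ k : ℕ, k ≤ g → (G.Adj x (f (a + (k : ZMod ℓ))) ↔ k = 0 ∨ k = g) := by
    intro k hk
    constructor
    · intro h
      by_contra hc
      push_neg at hc
      exact hint k (by omega) (by omega) h
    · rintro (rfl | rfl)
      · simpa using ha
      · exact hb
  have hcadj : ∀ p q : ℕ, p ≤ ℓ - 2 → q ≤ ℓ - 2 →
      (G.Adj (f (a + (p : ZMod ℓ))) (f (a + (q : ZMod ℓ))) ↔ q = p + 1 ∨ p = q + 1) := by
    intro p q hp hq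
    rw [hC.2.2]
    have e1 : ∀ p q : ℕ, p ≤ ℓ - 2 → q ≤ ℓ - 2 →
        ((a + (q : ZMod ℓ) = a + (p : ZMod ℓ) + 1) ↔ q = p + 1) := by
      intro p q hp hq
      constructor
      · intro h
        rw [add_assoc] at h
        have h2 : (q : ZMod ℓ) = ((p + 1 : ℕ) : ZMod ℓ) := by
          push_cast
          exact add_left_cancel h
        exact natCast_inj_of_lt (by omega) (by omega) h2
      · rintro rfl; push_cast; ring
    rw [e1 p q hp hq, e1 q p hq hp]
  refine ⟨by omega, ?_, ?_⟩
  · intro u v huv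
    have hun := ZMod.val_lt u
    have hvn := ZMod.val_lt v
    dsimp only at huv
    by_cases hu : u.val = 0 <;> by_cases hv : v.val = 0
    · exact ZMod.val_injective _ (hu.trans hv.symm)
    · rw [if_pos hu, if_neg hv] at huv
      exact absurd ⟨_, huv.symm⟩ hx
    · rw [if_neg hu, if_pos hv] at huv
      exact absurd ⟨_, huv⟩ hx
    · rw [if_neg hu, if_neg hv] at huv
      have h2 := offset_inj (by omega) (by omega) (hC.2.1 huv)
      exact ZMod.val_injective _ (by omega)
  · intro u v
    have hun := ZMod.val_lt u
    have hvn := ZMod.val_lt v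
    rw [zmod_eq_add_one_iff (by omega) u v, zmod_eq_add_one_iff (by omega) v u]
    dsimp only
    by_cases hu : u.val = 0 <;> by_cases hv : v.val = 0
    · rw [if_pos hu, if_pos hv, hu, hv]
      simp [Nat.mod_eq_of_lt (show 1 < g + 2 by omega)]
    · rw [if_pos hu, if_neg hv, hxadj (v.val - 1) (by omega), hu,
        mod_small (show v.val + 1 ≤ g + 2 by omega),
        mod_small (show 0 + 1 ≤ g + 2 by omega)]
      split_ifs <;> (try simp only [or_false, false_or, or_true, true_or, iff_true, true_iff, iff_false, false_iff]) <;> omega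
    · rw [if_neg hu, if_pos hv, hv]
      rw [show G.Adj (f (a + ((u.val - 1 : ℕ) : ZMod ℓ))) x ↔
          G.Adj x (f (a + ((u.val - 1 : ℕ) : ZMod ℓ))) from ⟨SimpleGraph.Adj.symm, SimpleGraph.Adj.symm⟩,
        hxadj (u.val - 1) (by omega),
        mod_small (show u.val + 1 ≤ g + 2 by omega),
        mod_small (show 0 + 1 ≤ g + 2 by omega)]
      split_ifs <;> (try simp only [or_false, false_or, or_true, true_or, iff_true, true_iff, iff_false, false_iff]) <;> omega
    · rw [if_neg hu, if_neg hv, hcadj (u.val - 1) (v.val - 1) (by omega) (by omega),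
        mod_small (show u.val + 1 ≤ g + 2 by omega),
        mod_small (show v.val + 1 ≤ g + 2 by omega)]
      split_ifs <;> (try simp only [or_false, false_or, or_true, true_or, iff_true, true_iff, iff_false, false_iff]) <;> omega

theorem stmt_4 {V : Type*} (G : SimpleGraph V)
    (hpan : ¬ HasInducedPan G) (heven : ¬ HasEvenHole G)
    (ℓ : ℕ) (f : ZMod ℓ → V) (hC : IsHole G ℓ f) (hℓ : 5 ≤ ℓ)
    (x : V) (hx : x ∉ Set.range f) (i : ZMod ℓ) (hxi : G.Adj x (f i)) :
    ({j : ZMod ℓ | G.Adj x (f j)}).ncard = 2 ∨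
    ({j : ZMod ℓ | G.Adj x (f j)}).ncard = 3 ∨
    ({j : ZMod ℓ | G.Adj x (f j)}).ncard = ℓ := by
  classical
  haveI : NeZero ℓ := ⟨by omega⟩
  haveI : NeZero (ℓ - 1) := ⟨by omega⟩
  set S : Set (ZMod ℓ) := {j : ZMod ℓ | G.Adj x (f j)} with hSdef
  by_cases h2 : S.ncard = 2
  · exact Or.inl h2
  by_cases h3 : S.ncard = 3
  · exact Or.inr (Or.inl h3)
  by_cases huniv : S = Set.univ
  · right; right
    rw [huniv, Set.ncard_univ, Nat.card_eq_fintype_card, ZMod.card]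
  exfalso
  have hfin : S.Finite := Set.toFinite S
  have hiS : i ∈ S := hxi
  have h1 : S.ncard ≠ 1 := by
    intro h
    obtain ⟨c, hc⟩ := Set.ncard_eq_one.mp h
    refine hpan ⟨ℓ, f, x, hC, hx, c, ?_, ?_⟩
    · have hcS : c ∈ S := by rw [hc]; exact rfl
      exact hcS
    · intro y hy
      have hyS : y ∈ S := hy
      rw [hc] at hyS
      exact hyS
  have hpos : 0 < S.ncard := (Set.ncard_pos hfin).mpr ⟨i, hiS⟩
  have h4 : 4 ≤ S.ncard := by omega
  have hlodd : ℓ % 2 = 1 := by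
    rcases Nat.even_or_odd ℓ with he | ho
    · exact absurd ⟨ℓ, f, hC, he⟩ heven
    · exact Nat.odd_iff.mp ho
  -- find a vertex of S whose successor is not in S
  obtain ⟨a, haS, ha1⟩ : ∃ a ∈ S, a + 1 ∉ S := by
    by_contra hcon
    push_neg at hcon
    apply huniv
    ext z
    simp only [Set.mem_univ, iff_true]
    obtain ⟨m, hm, rfl⟩ := exists_rep i z
    clear hm
    induction m with
    | zero => simpa using hiS
    | succ k ih =>
      have h := hcon _ ih
      have e : i + ((k + 1 : ℕ) : ZMod ℓ) = (i + (k : ZMod ℓ)) + 1 := by push_cast; ring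
      rw [e]; exact h
  -- minimal gap g
  have hexk : ∃ k : ℕ, 0 < k ∧ a + (k : ZMod ℓ) ∈ S := by
    refine ⟨ℓ, by omega, ?_⟩
    rw [ZMod.natCast_self, add_zero]
    exact haS
  obtain ⟨g, ⟨hgpos, hbS⟩, hminfind⟩ :
      ∃ g : ℕ, (0 < g ∧ a + (g : ZMod ℓ) ∈ S) ∧
        ∀ k : ℕ, k < g → ¬(0 < k ∧ a + (k : ZMod ℓ) ∈ S) :=
    ⟨Nat.find hexk, Nat.find_spec hexk, fun k hk => Nat.find_min hexk hk⟩
  have hminS : ∀ k : ℕ, 0 < k → k < g → a + (k : ZMod ℓ) ∉ S :=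
    fun k hk1 hk2 hk => hminfind k hk2 ⟨hk1, hk⟩
  have hgle : g ≤ ℓ := by
    by_contra h
    exact hminfind ℓ (by omega) ⟨by omega, by rw [ZMod.natCast_self, add_zero]; exact haS⟩
  have hg2 : 2 ≤ g := by
    by_contra h
    push_neg at h
    have h1' : g = 1 := by omega
    rw [h1'] at hbS
    exact ha1 (by simpa using hbS)
  have hrep : ∀ c ∈ S, ∃ m : ℕ, m < ℓ ∧ c = a + (m : ZMod ℓ) ∧ (m = 0 ∨ g ≤ m) := by
    intro c hc
    obtain ⟨m, hm, rfl⟩ := exists_rep a c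
    refine ⟨m, hm, rfl, ?_⟩
    by_contra hcon
    push_neg at hcon
    exact hminS m (by omega) (by omega) hc
  -- g ≤ ℓ - 2
  have hglt : g ≤ ℓ - 1 := by
    by_contra h
    have hgeq : g = ℓ := by omega
    have hsub : S ⊆ {a} := by
      intro c hc
      obtain ⟨m, hm, rfl, hm0⟩ := hrep c hc
      have hm' : m = 0 := by omega
      simp [hm']
    have hle := Set.ncard_le_ncard hsub (Set.finite_singleton a)
    rw [Set.ncard_singleton] at hle
    omega
  have hgl2 : g ≤ ℓ - 2 := by
    by_contra h
    have hgeq : g = ℓ - 1 := by omega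
    have hsub : S ⊆ {a, a + ((ℓ - 1 : ℕ) : ZMod ℓ)} := by
      intro c hc
      obtain ⟨m, hm, rfl, hm0⟩ := hrep c hc
      rcases hm0 with rfl | hge
      · left; simp
      · have hm' : m = ℓ - 1 := by omega
        right
        rw [hm']
        rfl
    have hle := Set.ncard_le_ncard hsub (Set.toFinite _)
    have hp := Set.ncard_insert_le a ({a + ((ℓ - 1 : ℕ) : ZMod ℓ)} : Set (ZMod ℓ))
    rw [Set.ncard_singleton] at hp
    omega
  -- the first hole forces g odd
  have hadj_a : G.Adj x (f a) := haS
  have hadj_b : G.Adj x (f (a + (g : ZMod ℓ))) := hbS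
  have hint1 : ∀ k : ℕ, 0 < k → k < g → ¬ G.Adj x (f (a + (k : ZMod ℓ))) :=
    fun k hk1 hk2 => hminS k hk1 hk2
  have hole1 := seg_hole hC hℓ hx a g hg2 hgl2 hadj_a hadj_b hint1
  haveI : NeZero (g + 2) := ⟨by omega⟩
  have hgodd : g % 2 = 1 := by
    by_contra h
    exact heven ⟨g + 2, _, hole1, Nat.even_iff.mpr (by omega)⟩
  by_cases hex5 : ∃ c ∈ S, c ≠ a ∧ c ≠ a + ((g : ℕ) : ZMod ℓ) ∧
      c ≠ a + ((ℓ - 1 : ℕ) : ZMod ℓ) ∧ c ≠ a + ((g + 1 : ℕ) : ZMod ℓ)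
  · -- pan
    obtain ⟨c, hcS, hca, hcb, hca', hcb'⟩ := hex5
    obtain ⟨m, hm, rfl, hm0⟩ := hrep c hcS
    have hm1 : m ≠ 0 := fun h => hca (by simp [h])
    have hmub : m ≠ g := fun h => hcb (by rw [h])
    have hmg1 : m ≠ g + 1 := fun h => hcb' (by rw [h])
    have hml1 : m ≠ ℓ - 1 := fun h => hca' (by rw [h])
    have hlb : g + 2 ≤ m := by omega
    have hub : m ≤ ℓ - 2 := by omega
    refine hpan ⟨g + 2, _, f (a + (m : ZMod ℓ)), hole1, ?_, 0, ?_, ?_⟩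
    · rintro ⟨u, hu⟩
      try dsimp only at hu
      have hun := ZMod.val_lt u
      by_cases h0 : u.val = 0
      · rw [if_pos h0] at hu
        exact hx ⟨_, hu.symm⟩
      · rw [if_neg h0] at hu
        have heq := offset_inj (show u.val - 1 < ℓ by omega) (by omega) (hC.2.1 hu)
        omega
    · have h0 : ((0 : ZMod (g + 2)).val) = 0 := ZMod.val_zero
      dsimp only
      rw [if_pos h0]
      exact (hcS : G.Adj x (f (a + (m : ZMod ℓ)))).symm
    · intro u hu
      try dsimp only at hu
      have hun := ZMod.val_lt u
      by_cases h0 : u.val = 0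
      · exact ZMod.val_injective _ (by rw [h0, ZMod.val_zero])
      · exfalso
        rw [if_neg h0] at hu
        rcases (hC.2.2 _ _).mp hu with h | h
        · have h' : a + ((u.val - 1 : ℕ) : ZMod ℓ) = a + ((m + 1 : ℕ) : ZMod ℓ) := by
            rw [h]; push_cast; ring
          have := offset_inj (by omega) (by omega) h'
          omega
        · have h' : a + ((m : ℕ) : ZMod ℓ) = a + ((u.val - 1 + 1 : ℕ) : ZMod ℓ) := by
            rw [h]; push_cast; ring
          have := offset_inj (by omega) (by omega) h'
          omega
  · -- S is exactly the 4-element set; build the second (even) hole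
    push_neg at hex5
    have hsub : S ⊆ {a, a + ((g : ℕ) : ZMod ℓ), a + ((ℓ - 1 : ℕ) : ZMod ℓ),
        a + ((g + 1 : ℕ) : ZMod ℓ)} := by
      intro c hcS
      simp only [Set.mem_insert_iff, Set.mem_singleton_iff]
      by_cases e1 : c = a
      · tauto
      by_cases e2 : c = a + ((g : ℕ) : ZMod ℓ)
      · tauto
      by_cases e3 : c = a + ((ℓ - 1 : ℕ) : ZMod ℓ)
      · tauto
      exact Or.inr (Or.inr (Or.inr (hex5 c hcS e1 e2 e3)))
    have hST : S = {a, a + ((g : ℕ) : ZMod ℓ), a + ((ℓ - 1 : ℕ) : ZMod ℓ),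
        a + ((g + 1 : ℕ) : ZMod ℓ)} :=
      Set.eq_of_subset_of_ncard_le hsub (le_trans (ncard_quad_le _ _ _ _) h4) (Set.toFinite _)
    have hgne : g + 1 ≠ ℓ - 1 := by
      intro h
      have hsub3 : S ⊆ {a, a + ((g : ℕ) : ZMod ℓ), a + ((ℓ - 1 : ℕ) : ZMod ℓ)} := by
        rw [hST]
        intro z hz
        simp only [Set.mem_insert_iff, Set.mem_singleton_iff] at hz ⊢
        rcases hz with h1 | h1 | h1 | h1
        · tauto
        · tauto
        · tauto
        · right; right; rw [h1, h]
      have hle := Set.ncard_le_ncard hsub3 (Set.toFinite _)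
      have := ncard_triple_le a (a + ((g : ℕ) : ZMod ℓ)) (a + ((ℓ - 1 : ℕ) : ZMod ℓ))
      omega
    have hg'2 : 2 ≤ ℓ - g - 2 := by omega
    have hb'S : a + ((g + 1 : ℕ) : ZMod ℓ) ∈ S := by rw [hST]; simp
    have ha'S : a + ((ℓ - 1 : ℕ) : ZMod ℓ) ∈ S := by rw [hST]; simp
    have hnat : g + 1 + (ℓ - g - 2) = ℓ - 1 := by omega
    have he : a + ((g + 1 : ℕ) : ZMod ℓ) + ((ℓ - g - 2 : ℕ) : ZMod ℓ)
        = a + ((ℓ - 1 : ℕ) : ZMod ℓ) := by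
      rw [add_assoc, ← Nat.cast_add, hnat]
    have hadj_a2 : G.Adj x (f (a + ((g + 1 : ℕ) : ZMod ℓ))) := hb'S
    have hadj_b2 : G.Adj x (f (a + ((g + 1 : ℕ) : ZMod ℓ) + ((ℓ - g - 2 : ℕ) : ZMod ℓ))) := by
      rw [he]; exact ha'S
    have hint2 : ∀ k : ℕ, 0 < k → k < ℓ - g - 2 →
        ¬ G.Adj x (f (a + ((g + 1 : ℕ) : ZMod ℓ) + (k : ZMod ℓ))) := by
      intro k hk1 hk2 hadj
      have hmem : a + ((g + 1 : ℕ) : ZMod ℓ) + (k : ZMod ℓ) ∈ S := hadj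
      rw [add_assoc, ← Nat.cast_add, hST] at hmem
      simp only [Set.mem_insert_iff, Set.mem_singleton_iff] at hmem
      have hb1 : g + 1 + k < ℓ := by omega
      rcases hmem with h | h | h | h
      · have := offset_inj hb1 (show (0 : ℕ) < ℓ by omega) (by rw [h]; simp)
        omega
      · have := offset_inj hb1 (by omega : g < ℓ) h
        omega
      · have := offset_inj hb1 (by omega : ℓ - 1 < ℓ) h
        omega
      · have := offset_inj hb1 (by omega : g + 1 < ℓ) h
        omega
    have hole2 := seg_hole hC hℓ hx (a + ((g + 1 : ℕ) : ZMod ℓ)) (ℓ - g - 2) hg'2 (by omega)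
      hadj_a2 hadj_b2 hint2
    exact heven ⟨ℓ - g - 2 + 2, _, hole2, Nat.even_iff.mpr (by omega)⟩
end

section
/- Let G be a C4-free graph and let B be an ℓ-buoy in G with bags B_0, ..., B_{ℓ-1} (ℓ ≥ 5). Then any two vertices a, b in the same bag B_i are comparable with respect to B_{i-1}: either every neighbor of a in B_{i-1} other than b is a neighbor of b, or every neighbor of b in B_{i-1} other than a is a neighbor of a. -/
def IsBuoy {V : Type*} (G : SimpleGraph V) (ℓ : ℕ) (B : ZMod ℓ → Set V) : Prop :=
  5 ≤ ℓ ∧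
  (∀ i, (B i).Nonempty) ∧
  (∀ i, G.IsClique (B i)) ∧
  (Pairwise fun i j => Disjoint (B i) (B j)) ∧
  (∀ i, ∀ v ∈ B i, ∃ u ∈ B (i + 1), G.Adj v u) ∧
  (∀ i, ∀ v ∈ B i, ∃ u ∈ B (i - 1), G.Adj v u) ∧
  (∀ i j : ZMod ℓ, j ≠ i → j ≠ i + 1 → j ≠ i - 1 →
    ∀ v ∈ B i, ∀ u ∈ B j, ¬ G.Adj v u)

/-- A graph is C4-free if it contains no induced 4-cycle. -/
def C4Free {V : Type*} (G : SimpleGraph V) : Prop :=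
  ¬ ∃ f : ZMod 4 → V, IsHole G 4 f

theorem stmt_5 {V : Type*} (G : SimpleGraph V) (hC4 : C4Free G)
    (ℓ : ℕ) (B : ZMod ℓ → Set V) (hB : IsBuoy G ℓ B)
    (i : ZMod ℓ) (a b : V) (ha : a ∈ B i) (hb : b ∈ B i) :
    (∀ z ∈ B (i - 1), z ≠ b → G.Adj a z → G.Adj b z) ∨
    (∀ z ∈ B (i - 1), z ≠ a → G.Adj b z → G.Adj a z) := by
  by_contra h
  push_neg at h
  obtain ⟨⟨z, hzB, hzb, hza, hbz⟩, ⟨w, hwB, hwa, hbw, haw⟩⟩ := h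
  obtain ⟨hℓ, -, hclique, hdisj, -, -, -⟩ := hB
  haveI : Fact (1 < ℓ) := ⟨by omega⟩
  have hii : (i - 1 : ZMod ℓ) ≠ i := fun h => one_ne_zero (sub_eq_self.mp h)
  have hdz : z ∉ B i := fun hz => (hdisj hii).ne_of_mem hzB hz rfl
  have hdw : w ∉ B i := fun hw => (hdisj hii).ne_of_mem hwB hw rfl
  have hab : a ≠ b := fun h => hbz (h ▸ hza)
  have hzw : z ≠ w := fun h => haw (h ▸ hza)
  have haz : a ≠ z := fun h => hdz (h ▸ ha)
  have hawne : a ≠ w := fun h => hdw (h ▸ ha)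
  have hbwne : b ≠ w := fun h => hdw (h ▸ hb)
  have hbz' : b ≠ z := fun h => hzb h.symm
  have hAab : G.Adj a b := hclique i ha hb hab
  have hAzw : G.Adj z w := hclique (i - 1) hzB hwB hzw
  have hAwb : G.Adj w b := hbw.symm
  have hNzb : ¬ G.Adj z b := fun h => hbz h.symm
  have quad : ∀ u : ZMod 4, u = 0 ∨ u = 1 ∨ u = 2 ∨ u = 3 := by decide
  apply hC4
  refine ⟨![a, z, w, b], le_refl 4, ?_, ?_⟩
  · intro x y hxy
    rcases quad x with hx | hx | hx | hx <;> rcases quad y with hy | hy | hy | hy <;>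
      subst hx <;> subst hy <;>
      first
        | rfl
        | exact absurd hxy hab | exact absurd hxy.symm hab
        | exact absurd hxy hzw | exact absurd hxy.symm hzw
        | exact absurd hxy haz | exact absurd hxy.symm haz
        | exact absurd hxy hawne | exact absurd hxy.symm hawne
        | exact absurd hxy.symm hbwne | exact absurd hxy hbwne
        | exact absurd hxy.symm hbz' | exact absurd hxy hbz'
  · intro x y
    rcases quad x with hx | hx | hx | hx <;> rcases quad y with hy | hy | hy | hy <;>
      subst hx <;> subst hy <;>
      first
        | exact iff_of_true hza (by decide)
        | exact iff_of_true hza.symm (by decide)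
        | exact iff_of_true hAab (by decide)
        | exact iff_of_true hAab.symm (by decide)
        | exact iff_of_true hAzw (by decide)
        | exact iff_of_true hAzw.symm (by decide)
        | exact iff_of_true hAwb (by decide)
        | exact iff_of_true hAwb.symm (by decide)
        | exact iff_of_false (G.irrefl) (by decide)
        | exact iff_of_false haw (by decide)
        | exact iff_of_false (fun h => haw h.symm) (by decide)
        | exact iff_of_false hNzb (by decide)
        | exact iff_of_false (fun h => hNzb h.symm) (by decide)
end

section
/- Let G be a (pan, even hole)-free graph, B an ℓ-buoy in G (ℓ ≥ 5), and a, b two vertices in the same bag B_i. If a strictly dominates b with respect to B_{i+1} (i.e., the neighbors of b in B_{i+1} form a proper subset of the neighbors of a in B_{i+1}), then b dominates a with respect to B_{i-1} (every neighbor of a in B_{i-1} is a neighbor of b). -/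
/-!
Suppose `z ∈ B (i - 1)` is adjacent to `a` but not to `b`, and let `x ∈ B (i + 1)` be adjacent
to `a` but not to `b`. Walking backwards from `z` around the buoy gives a path
`T = c₀, …, c_{ℓ-4}, z` through the bags `B (i + 2), …, B (i - 1)`. Every vertex of `B (i + 1)`
adjacent to `a` and `T` closes a hole through `a` on which `b` would hang as a pan, so it is
adjacent to `b`; in particular `x` misses `T`. For a neighbour `s ∈ B (i + 1)` of `T`, this
forces `a ∼ s` (otherwise `a, x, s, T, …, z` is an `(ℓ + 1)`-hole with pendant `b`) and then
`b ∼ s`. Finally a neighbour `w ∈ B (i - 1)` of `b` either sees `c_{ℓ-4}`, giving the hole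
`w, b, s, T, …, c_{ℓ-4}` with pendant `x`, or it does not, and then the holes
`z, a, s, T, …, c_{ℓ-4}` and `z, w, b, s, T, …, c_{ℓ-4}` have lengths `ℓ` and `ℓ + 1`, one of
which is even.
-/

open Stream'

theorem ZMod.natCast_eq_natCast_add_one_iff {n c d : ℕ} (hc : c < n) (hd : d < n) :
    (d : ZMod n) = c + 1 ↔ d = c + 1 ∨ (d = 0 ∧ c + 1 = n) := by
  rw [← Nat.cast_succ, ZMod.natCast_eq_natCast_iff', Nat.mod_eq_of_lt hd]
  rcases (Nat.succ_le_of_lt hc).lt_or_eq with h | h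
  · rw [Nat.mod_eq_of_lt h]; omega
  · rw [h, Nat.mod_self]; omega

theorem ZMod.eq_add_one_iff_val_s8 {n : ℕ} [NeZero n] (j k : ZMod n) :
    k = j + 1 ↔ k.val = j.val + 1 ∨ (k.val = 0 ∧ j.val + 1 = n) := by
  conv_lhs => rw [← ZMod.natCast_zmod_val j, ← ZMod.natCast_zmod_val k]
  exact ZMod.natCast_eq_natCast_add_one_iff j.val_lt k.val_lt

section Holes

variable {V : Type*} {G : SimpleGraph V}

theorem isHole_of_nat {n : ℕ} {h : Stream' V} (hn : 4 ≤ n) (hinj : Set.InjOn h.get (Set.Iio n))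
    (hadj : ∀ m, m + 1 < n → G.Adj (h.get m) (h.get (m + 1)))
    (hclose : G.Adj (h.get (n - 1)) (h.get 0))
    (hchord : ∀ p q, p + 2 ≤ q → q < n → (p = 0 → q + 1 ≠ n) → ¬ G.Adj (h.get p) (h.get q)) :
    IsHole G n (fun k => h.get k.val) := by
  have : NeZero n := ⟨by omega⟩
  have hadj_iff : ∀ p q, p < n → q < n →
      (G.Adj (h.get p) (h.get q) ↔ q = p + 1 ∨ (q = 0 ∧ p + 1 = n) ∨ p = q + 1 ∨
        (p = 0 ∧ q + 1 = n)) := by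
    intro p q hp hq
    constructor
    · intro hpq
      by_contra! hne
      rcases lt_trichotomy p q with hlt | rfl | hlt
      · exact hchord p q (by omega) hq (by omega) hpq
      · exact G.irrefl hpq
      · exact hchord q p (by omega) hp (by omega) hpq.symm
    · rintro (rfl | ⟨rfl, hp⟩ | rfl | ⟨rfl, hq⟩)
      · exact hadj p hq
      · rw [show p = n - 1 by omega]; exact hclose
      · exact (hadj q hp).symm
      · rw [show q = n - 1 by omega]; exact hclose.symm
  refine ⟨hn, fun j k hjk => ZMod.val_injective n (hinj j.val_lt k.val_lt hjk), fun j k => ?_⟩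
  rw [hadj_iff _ _ j.val_lt k.val_lt, ZMod.eq_add_one_iff_val_s8, ZMod.eq_add_one_iff_val_s8]
  tauto

theorem hasInducedPan_of_nat {n k : ℕ} {h : Stream' V} {y : V}
    (hhole : IsHole G n (fun j => h.get j.val)) (hk : k < n) (hy : ∀ m < n, h.get m ≠ y)
    (hyh : ∀ m < n, G.Adj y (h.get m) ↔ m = k) : HasInducedPan G := by
  have : NeZero n := ⟨by have := hhole.1; omega⟩
  refine ⟨n, _, y, hhole, fun ⟨j, hj⟩ => hy _ j.val_lt hj, k, ?_, fun j hj => ?_⟩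
  · simpa [ZMod.val_natCast_of_lt hk] using (hyh k hk).2 rfl
  · rw [← ZMod.natCast_zmod_val j, (hyh _ j.val_lt).1 hj]

end Holes

theorem Stream'.get_cons_of_pos {α : Type*} (a : α) (s : Stream' α) {m : ℕ} (hm : 0 < m) :
    (a :: s).get m = s.get (m - 1) := by
  cases m with
  | zero => omega
  | succ m => rfl

def IsBuoyPath {V : Type*} (G : SimpleGraph V) {ℓ : ℕ} (B : ZMod ℓ → Set V) (j : ZMod ℓ)
    (d : ℕ) (p : Stream' V) : Prop :=
  (∀ m ≤ d, p.get m ∈ B (j + m)) ∧ ∀ m < d, G.Adj (p.get m) (p.get (m + 1))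

namespace IsBuoyPath

variable {V : Type*} {G : SimpleGraph V} {ℓ : ℕ} {B : ZMod ℓ → Set V} {j : ZMod ℓ} {d : ℕ}
  {p : Stream' V}

theorem mono (hp : IsBuoyPath G B j d p) {d' : ℕ} (hd : d' ≤ d) : IsBuoyPath G B j d' p :=
  ⟨fun m hm => hp.1 m (hm.trans hd), fun m hm => hp.2 m (hm.trans_le hd)⟩

theorem cons (hp : IsBuoyPath G B j d p) {j' : ZMod ℓ} {v : V} (hv : v ∈ B j')
    (hvp : G.Adj v (p.get 0)) (hj : j' + 1 = j) : IsBuoyPath G B j' (d + 1) (v :: p) := by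
  refine ⟨fun m hm => ?_, fun m hm => ?_⟩
  · cases m with
    | zero => simpa using hv
    | succ m =>
      show p.get m ∈ _
      rw [show j' + ((m + 1 : ℕ) : ZMod ℓ) = j + m by rw [← hj]; push_cast; ring]
      exact hp.1 m (by omega)
  · cases m with
    | zero => exact hvp
    | succ m => exact hp.2 m (by omega)

theorem get_cons_mem (hp : IsBuoyPath G B j d p) {v : V} (hv : v ∈ B j) :
    ∀ m ≤ d + 1, (v :: p).get m ∈ B (j + (m - 1 : ℕ))
  -- `0 - 1 = 0` in `ℕ`: `v` shares the bag `B j` with `p.get 0`.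
  | 0, _ => by simpa using hv
  | m + 1, hm => hp.1 m (by omega)

end IsBuoyPath

namespace IsBuoy

variable {V : Type*} {G : SimpleGraph V} {ℓ : ℕ} {B : ZMod ℓ → Set V} {j : ZMod ℓ}

theorem eq_of_mem_add (hB : IsBuoy G ℓ B) {c d : ℕ} {v : V} (hc : c < ℓ) (hd : d < ℓ)
    (hvc : v ∈ B (j + c)) (hvd : v ∈ B (j + d)) : c = d := by
  by_contra hne
  refine Set.disjoint_left.mp (hB.2.2.2.1 fun h => hne ?_) hvc hvd
  rwa [add_right_inj, ZMod.natCast_eq_natCast_iff', Nat.mod_eq_of_lt hc,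
    Nat.mod_eq_of_lt hd] at h

theorem near_of_adj (hB : IsBuoy G ℓ B) {c d : ℕ} {v w : V} (hc : c < ℓ) (hd : d < ℓ)
    (hv : v ∈ B (j + c)) (hw : w ∈ B (j + d)) (hvw : G.Adj v w) :
    d = c ∨ d = c + 1 ∨ c = d + 1 ∨ (d = 0 ∧ c + 1 = ℓ) ∨ (c = 0 ∧ d + 1 = ℓ) := by
  by_contra hfar
  refine hB.2.2.2.2.2.2 _ _ ?_ ?_ ?_ v hv w hw hvw
  · rw [ne_eq, add_right_inj, ZMod.natCast_eq_natCast_iff', Nat.mod_eq_of_lt hc,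
      Nat.mod_eq_of_lt hd]
    omega
  · rw [ne_eq, add_assoc, add_right_inj, ZMod.natCast_eq_natCast_add_one_iff hc hd]
    omega
  · rw [ne_eq, eq_sub_iff_add_eq, add_assoc, add_right_inj, eq_comm,
      ZMod.natCast_eq_natCast_add_one_iff hd hc]
    omega

theorem exists_isBuoyPath_extend (hB : IsBuoy G ℓ B) {e : ℕ} {q : Stream' V} (d : ℕ)
    (hq : IsBuoyPath G B (j + d) e q) : ∃ p, IsBuoyPath G B j (d + e) p ∧ p.drop d = q := by
  induction d generalizing j with
  | zero => exact ⟨q, by simpa using hq, rfl⟩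
  | succ d ih =>
    obtain ⟨p, hp, rfl⟩ := ih (j := j + 1)
      (by rwa [add_assoc, ← Nat.cast_one, ← Nat.cast_add, add_comm 1])
    obtain ⟨v, hv, hvp⟩ := hB.2.2.2.2.2.1 _ _ (hp.1 0 (Nat.zero_le _))
    refine ⟨v :: p, ?_, by rw [Stream'.drop_succ, Stream'.tail_cons]⟩
    rw [Nat.succ_add]
    exact hp.cons (by simpa using hv) hvp.symm rfl

theorem isHole_of_isBuoyPath (hB : IsBuoy G ℓ B) {p : Stream' V}
    (hp : IsBuoyPath G B j (ℓ - 1) p) (hclose : G.Adj (p.get (ℓ - 1)) (p.get 0)) :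
    IsHole G ℓ (fun k => p.get k.val) := by
  have hℓ := hB.1
  refine isHole_of_nat (by omega) (fun m hm m' hm' h => ?_) (fun m hm => hp.2 m (by omega))
    hclose fun m m' hmm' hm' h0 hadj => ?_
  · rw [Set.mem_Iio] at hm hm'
    exact hB.eq_of_mem_add hm hm' (hp.1 m (by omega)) (h ▸ hp.1 m' (by omega))
  · have := hB.near_of_adj (by omega) hm' (hp.1 m (by omega)) (hp.1 m' (by omega)) hadj
    omega

theorem hasInducedPan_of_isBuoyPath (hB : IsBuoy G ℓ B) {p : Stream' V} {y : V} {k : ℕ}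
    (hp : IsBuoyPath G B j (ℓ - 1) p) (hclose : G.Adj (p.get (ℓ - 1)) (p.get 0))
    (hk : k + 2 < ℓ) (hy : y ∈ B (j + (k + 1 : ℕ))) (hyp : y ≠ p.get (k + 1))
    (hyl : ¬ G.Adj y (p.get k)) (hyr : ¬ G.Adj y (p.get (k + 2))) : HasInducedPan G := by
  refine hasInducedPan_of_nat (hB.isHole_of_isBuoyPath hp hclose) (k := k + 1) (y := y) (by omega)
    (fun m hm h => ?_) fun m hm => ⟨fun hadj => ?_, ?_⟩
  · obtain rfl := hB.eq_of_mem_add hm (by omega) (hp.1 m (by omega)) (h ▸ hy)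
    exact hyp h.symm
  · have := hB.near_of_adj (by omega) hm hy (hp.1 m (by omega)) hadj
    obtain rfl | rfl | rfl : m = k + 1 ∨ m = k + 2 ∨ m = k := by omega
    exacts [rfl, absurd hadj hyr, absurd hadj hyl]
  · rintro rfl
    exact hB.2.2.1 _ hy (hp.1 _ (by omega)) hyp

theorem isHole_of_isBuoyPath_cons (hB : IsBuoy G ℓ B) {p : Stream' V} {v : V}
    (hp : IsBuoyPath G B j (ℓ - 1) p) (hv : v ∈ B j) (hvp : G.Adj v (p.get 0))
    (hclose : G.Adj (p.get (ℓ - 1)) v) (hv1 : ¬ G.Adj v (p.get 1))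
    (hp0 : ¬ G.Adj (p.get 0) (p.get (ℓ - 1))) :
    IsHole G (ℓ + 1) (fun k => (v :: p).get k.val) := by
  have hℓ := hB.1
  have hmem := hp.get_cons_mem hv
  refine isHole_of_nat (by omega) (fun m hm m' hm' h => ?_) (fun m hm => ?_) ?_
    fun m m' hmm' hm' h0 hadj => ?_
  · rw [Set.mem_Iio] at hm hm'
    have := hB.eq_of_mem_add (by omega) (by omega) (hmem m (by omega)) (h ▸ hmem m' (by omega))
    by_contra hne
    obtain ⟨rfl, rfl⟩ | ⟨rfl, rfl⟩ : m = 0 ∧ m' = 1 ∨ m = 1 ∧ m' = 0 := by omega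
    exacts [G.ne_of_adj hvp h, G.ne_of_adj hvp h.symm]
  · rcases m with _ | m
    exacts [hvp, hp.2 m (by omega)]
  · rwa [Nat.add_sub_cancel, Stream'.get_cons_of_pos _ _ (by omega)]
  · have := hB.near_of_adj (by omega) (by omega) (hmem m (by omega)) (hmem m' (by omega)) hadj
    obtain ⟨rfl, rfl⟩ | ⟨rfl, rfl⟩ : m = 0 ∧ m' = 2 ∨ m = 1 ∧ m' = ℓ := by omega
    · exact hv1 hadj
    · rw [Stream'.get_cons_of_pos v p (m := m') (by omega)] at hadj
      exact hp0 hadj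

theorem hasInducedPan_of_isBuoyPath_cons (hB : IsBuoy G ℓ B) {p : Stream' V} {v y : V}
    (hp : IsBuoyPath G B j (ℓ - 1) p) (hv : v ∈ B j) (hvp : G.Adj v (p.get 0))
    (hclose : G.Adj (p.get (ℓ - 1)) v) (hv1 : ¬ G.Adj v (p.get 1))
    (hp0 : ¬ G.Adj (p.get 0) (p.get (ℓ - 1))) (hy : y ∈ B (j + (ℓ - 1 : ℕ)))
    (hyp : y ≠ p.get (ℓ - 1)) (hyv : ¬ G.Adj y v) (hy0 : ¬ G.Adj y (p.get 0))
    (hy2 : ¬ G.Adj y (p.get (ℓ - 2))) : HasInducedPan G := by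
  have hℓ := hB.1
  have hmem := hp.get_cons_mem hv
  have hlast : (v :: p).get ℓ = p.get (ℓ - 1) := Stream'.get_cons_of_pos _ _ (by omega)
  refine hasInducedPan_of_nat (hB.isHole_of_isBuoyPath_cons hp hv hvp hclose hv1 hp0)
    (k := ℓ) (y := y) (by omega) (fun m hm h => ?_) fun m hm => ⟨fun hadj => ?_, ?_⟩
  · obtain rfl : m = ℓ := by
      have := hB.eq_of_mem_add (by omega) (by omega) (hmem m (by omega)) (h ▸ hy)
      omega
    exact hyp (h.symm.trans hlast)
  · have := hB.near_of_adj (by omega) (by omega) hy (hmem m (by omega)) hadj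
    obtain rfl | rfl | rfl | rfl : m = ℓ ∨ m = ℓ - 1 ∨ m = 0 ∨ m = 1 := by omega
    · rfl
    · rw [Stream'.get_cons_of_pos _ _ (by omega), show ℓ - 1 - 1 = ℓ - 2 by omega] at hadj
      exact absurd hadj hy2
    · exact absurd hadj hyv
    · exact absurd hadj hy0
  · rintro rfl
    exact hB.2.2.1 _ hy (hmem m (by omega)) (hlast ▸ hyp)

end IsBuoy

theorem ZMod.natCast_self_sub {n k : ℕ} (hk : k ≤ n) : ((n - k : ℕ) : ZMod n) = -(k : ZMod n) := by
  rw [Nat.cast_sub hk, ZMod.natCast_self, zero_sub]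

theorem IsBuoy.exists_isBuoyPath_to_adj {V : Type*} {G : SimpleGraph V} {ℓ : ℕ}
    {B : ZMod ℓ → Set V} (hB : IsBuoy G ℓ B) {i : ZMod ℓ} {z a : V} (hz : z ∈ B (i - 1))
    (ha : a ∈ B i) (hza : G.Adj z a) :
    ∃ c, IsBuoyPath G B (i + 2) (ℓ - 2) c ∧ c.get (ℓ - 3) = z ∧ c.get (ℓ - 2) = a := by
  have hℓ := hB.1
  have hq : IsBuoyPath G B (i + 2 + (ℓ - 3 : ℕ)) 1 (z :: Stream'.const a) := by
    rw [ZMod.natCast_self_sub (by omega), show i + 2 + -((3 : ℕ) : ZMod ℓ) = i - 1 by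
      push_cast; ring]
    refine ⟨fun m hm => ?_, fun m hm => ?_⟩
    · obtain rfl | rfl : m = 0 ∨ m = 1 := by omega
      · simpa using hz
      · simpa using ha
    · obtain rfl : m = 0 := by omega
      exact hza
  obtain ⟨c, hc, hcq⟩ := hB.exists_isBuoyPath_extend _ hq
  refine ⟨c, by rwa [show ℓ - 3 + 1 = ℓ - 2 by omega] at hc, ?_, ?_⟩
  · simpa using congrArg (Stream'.get · 0) hcq
  · have := congrArg (Stream'.get · 1) hcq
    simp only [Stream'.get_drop] at this
    rwa [show ℓ - 3 + 1 = ℓ - 2 by omega] at this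

structure DominationCounterexample {V : Type*} (G : SimpleGraph V) {ℓ : ℕ}
    (B : ZMod ℓ → Set V) (i : ZMod ℓ) (a b x z : V) (c : Stream' V) : Prop where
  buoy : IsBuoy G ℓ B
  mem_a : a ∈ B i
  mem_b : b ∈ B i
  mem_x : x ∈ B (i + 1)
  mem_z : z ∈ B (i - 1)
  adj_ax : G.Adj a x
  not_adj_bx : ¬ G.Adj b x
  not_adj_bz : ¬ G.Adj b z
  dom : ∀ t ∈ B (i + 1), G.Adj b t → G.Adj a t
  path : IsBuoyPath G B (i + 2) (ℓ - 2) c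
  get_z : c.get (ℓ - 3) = z
  get_a : c.get (ℓ - 2) = a

namespace DominationCounterexample

variable {V : Type*} {G : SimpleGraph V} {ℓ : ℕ} {B : ZMod ℓ → Set V} {i : ZMod ℓ}
  {a b x z : V} {c : Stream' V}

theorem ne (h : DominationCounterexample G B i a b x z c) : a ≠ b :=
  fun hab => h.not_adj_bx (hab ▸ h.adj_ax)

theorem adj_pred_z (h : DominationCounterexample G B i a b x z c) :
    G.Adj (c.get (ℓ - 4)) z := by
  have hℓ := h.buoy.1
  have := h.path.2 (ℓ - 4) (by omega)
  rwa [show ℓ - 4 + 1 = ℓ - 3 by omega, h.get_z] at this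

theorem adj_z_a (h : DominationCounterexample G B i a b x z c) : G.Adj z a := by
  have hℓ := h.buoy.1
  have := h.path.2 (ℓ - 3) (by omega)
  rwa [h.get_z, show ℓ - 3 + 1 = ℓ - 2 by omega, h.get_a] at this

theorem isBuoyPath_cons₃ (h : DominationCounterexample G B i a b x z c) {u v t : V}
    (hu : u ∈ B (i - 1)) (hv : v ∈ B i) (ht : t ∈ B (i + 1)) (huv : G.Adj u v)
    (hvt : G.Adj v t) (htc : G.Adj t (c.get 0)) :
    IsBuoyPath G B (i - 1) (ℓ - 1) (u :: v :: t :: c) := by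
  have hℓ := h.buoy.1
  have := (((h.path.mono (Nat.sub_le_sub_left (show 2 ≤ 4 by norm_num) ℓ)).cons ht htc
    (by ring)).cons hv hvt rfl).cons hu huv (by ring)
  rwa [show ℓ - 4 + 1 + 1 + 1 = ℓ - 1 by omega] at this

theorem get_cons₃_pred (h : DominationCounterexample G B i a b x z c) (u v t : V) :
    (u :: v :: t :: c).get (ℓ - 1) = c.get (ℓ - 4) := by
  have hℓ := h.buoy.1
  rw [show ℓ - 1 = ℓ - 4 + 3 by omega]
  rfl

theorem adj_b_of_adj_a_of_adj_head (h : DominationCounterexample G B i a b x z c)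
    (hpan : ¬ HasInducedPan G) {t : V} (ht : t ∈ B (i + 1)) (hat : G.Adj a t)
    (htc : G.Adj t (c.get 0)) : G.Adj b t := by
  by_contra hbt
  refine hpan (h.buoy.hasInducedPan_of_isBuoyPath (k := 0)
    (h.isBuoyPath_cons₃ h.mem_z h.mem_a ht h.adj_z_a hat htc) ?_ (by have := h.buoy.1; omega)
    (by simpa using h.mem_b) h.ne.symm h.not_adj_bz hbt)
  rw [h.get_cons₃_pred]
  exact h.adj_pred_z

theorem not_adj_x_head (h : DominationCounterexample G B i a b x z c)
    (hpan : ¬ HasInducedPan G) : ¬ G.Adj x (c.get 0) := fun hxc =>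
  h.not_adj_bx (h.adj_b_of_adj_a_of_adj_head hpan h.mem_x h.adj_ax hxc)

theorem adj_a_of_adj_head (h : DominationCounterexample G B i a b x z c)
    (hpan : ¬ HasInducedPan G) {s : V} (hs : s ∈ B (i + 1)) (hsc : G.Adj s (c.get 0)) :
    G.Adj a s := by
  have hℓ := h.buoy.1
  by_contra has
  have hxs : G.Adj x s := h.buoy.2.2.1 _ h.mem_x hs (by rintro rfl; exact has h.adj_ax)
  have hp : IsBuoyPath G B (i + 1) (ℓ - 1) (s :: c) := by
    have := h.path.cons hs hsc (by ring)
    rwa [show ℓ - 2 + 1 = ℓ - 1 by omega] at this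
  have hlast : (s :: c).get (ℓ - 1) = a := by
    rw [Stream'.get_cons_of_pos _ _ (by omega), show ℓ - 1 - 1 = ℓ - 2 by omega, h.get_a]
  have hpen : (s :: c).get (ℓ - 2) = z := by
    rw [Stream'.get_cons_of_pos _ _ (by omega), show ℓ - 2 - 1 = ℓ - 3 by omega, h.get_z]
  refine hpan (h.buoy.hasInducedPan_of_isBuoyPath_cons hp h.mem_x hxs ?_
    (h.not_adj_x_head hpan) ?_ ?_ ?_ h.not_adj_bx (fun hbs => has (h.dom s hs hbs)) ?_)
  · rw [hlast]; exact h.adj_ax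
  · rw [hlast]; exact fun hsa => has hsa.symm
  · rw [ZMod.natCast_self_sub (by omega)]; simpa using h.mem_b
  · rw [hlast]; exact h.ne.symm
  · rw [hpen]; exact h.not_adj_bz

theorem not_adj_w_pred (h : DominationCounterexample G B i a b x z c)
    (hpan : ¬ HasInducedPan G) {s w : V} (hs : s ∈ B (i + 1)) (hsc : G.Adj s (c.get 0))
    (hbs : G.Adj b s) (hw : w ∈ B (i - 1)) (hbw : G.Adj b w) : ¬ G.Adj w (c.get (ℓ - 4)) := by
  have hℓ := h.buoy.1
  intro hwc
  refine hpan (h.buoy.hasInducedPan_of_isBuoyPath (k := 1)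
    (h.isBuoyPath_cons₃ hw h.mem_b hs hbw.symm hbs hsc) ?_ (by omega) ?_ ?_
    (fun hxb => h.not_adj_bx hxb.symm) (h.not_adj_x_head hpan))
  · rw [h.get_cons₃_pred]; exact hwc.symm
  · rw [show i - 1 + ((1 + 1 : ℕ) : ZMod ℓ) = i + 1 by push_cast; ring]; exact h.mem_x
  · rintro (hxs : x = s); exact h.not_adj_bx (hxs ▸ hbs)

theorem false (h : DominationCounterexample G B i a b x z c) (hpan : ¬ HasInducedPan G)
    (heven : ¬ HasEvenHole G) : False := by
  obtain ⟨s, hs, hsc⟩ := h.buoy.2.2.2.2.2.1 _ _ (h.path.1 0 (Nat.zero_le _))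
  rw [show i + 2 + ((0 : ℕ) : ZMod ℓ) - 1 = i + 1 by push_cast; ring] at hs
  have has := h.adj_a_of_adj_head hpan hs hsc.symm
  have hbs := h.adj_b_of_adj_a_of_adj_head hpan hs has hsc.symm
  obtain ⟨w, hw, hbw⟩ := h.buoy.2.2.2.2.2.1 _ _ h.mem_b
  have hwz : G.Adj w z := h.buoy.2.2.1 _ hw h.mem_z (by rintro rfl; exact h.not_adj_bz hbw)
  have hwc := h.not_adj_w_pred hpan hs hsc.symm hbs hw hbw
  have hclose : ∀ u v t : V, G.Adj ((u :: v :: t :: c).get (ℓ - 1)) z := fun u v t => by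
    rw [h.get_cons₃_pred]; exact h.adj_pred_z
  have hole := h.buoy.isHole_of_isBuoyPath
    (h.isBuoyPath_cons₃ h.mem_z h.mem_a hs h.adj_z_a has hsc.symm) (hclose _ _ _)
  have hole_succ := h.buoy.isHole_of_isBuoyPath_cons
    (h.isBuoyPath_cons₃ hw h.mem_b hs hbw.symm hbs hsc.symm) h.mem_z hwz.symm (hclose _ _ _)
    (fun hzb => h.not_adj_bz hzb.symm) (by rw [h.get_cons₃_pred]; exact hwc)
  rcases Nat.even_or_odd ℓ with hℓ | hℓ
  exacts [heven ⟨ℓ, _, hole, hℓ⟩, heven ⟨ℓ + 1, _, hole_succ, hℓ.add_one⟩]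

end DominationCounterexample

theorem stmt_8 {V : Type*} (G : SimpleGraph V)
    (hpan : ¬ HasInducedPan G) (heven : ¬ HasEvenHole G)
    (ℓ : ℕ) (B : ZMod ℓ → Set V) (hB : IsBuoy G ℓ B)
    (i : ZMod ℓ) (a b : V) (ha : a ∈ B i) (hb : b ∈ B i)
    (hdom : {z ∈ B (i + 1) | G.Adj b z} ⊂ {z ∈ B (i + 1) | G.Adj a z}) :
    ∀ z ∈ B (i - 1), G.Adj a z → G.Adj b z := by
  intro z hz haz
  by_contra hbz
  obtain ⟨x, ⟨hx, hax⟩, hbx⟩ := Set.exists_of_ssubset hdom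
  obtain ⟨c, hc, hcz, hca⟩ := hB.exists_isBuoyPath_to_adj hz ha haz.symm
  exact DominationCounterexample.false ⟨hB, ha, hb, hx, hz, hax, fun hbx' => hbx ⟨hx, hbx'⟩, hbz,
    fun t ht hbt => (hdom.1 ⟨ht, hbt⟩).2, hc, hcz, hca⟩ hpan heven
end

section
/- Let G be a (pan, even hole)-free graph and B an ℓ-buoy in G (ℓ ≥ 5) with bags B_0, ..., B_{ℓ-1}. Then for every i, either B_{i-1} ∪ B_i induces a clique or B_i ∪ B_{i+1} induces a clique. -/
/-
A transversal cycle (one vertex in each bag, consecutive ones adjacent) is a hole of length ℓ.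

If ℓ is even, follow a walk spiralling around the buoy. No ℓ consecutive vertices of it close
up into a transversal cycle, and then 4-holes between consecutive turns force the adjacencies
that make a hole of even length ℓ + 2 out of three turns.

If ℓ is odd, consider a transversal path around the buoy that skips only bag i. Two vertices
x, y ∈ B i, x seeing only the end in bag i - 1 and y only the end in bag i + 1, would close it
into a hole of even length ℓ + 1. So the path closes into a transversal cycle, and by
pan-freeness every vertex of B i sees one of the two ends. Now take a ∈ B (i - 1), b ∈ B i
non-adjacent and c ∈ B i, d ∈ B (i + 1) non-adjacent, and a path from d around to a: b must see
d and c must see a, so c and b form a forbidden pair x, y.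
-/

open Function

theorem ZMod.eq_add_one_iff_val_s9 {n : ℕ} (hn : 2 ≤ n) {s t : ZMod n} :
    t = s + 1 ↔ t.val = s.val + 1 ∨ s.val + 1 = n ∧ t.val = 0 := by
  have : NeZero n := ⟨by omega⟩
  have : Fact (1 < n) := ⟨by omega⟩
  have hs := ZMod.val_lt s
  have ht := ZMod.val_lt t
  rw [← (ZMod.val_injective n).eq_iff, ZMod.val_add, ZMod.val_one]
  rcases (by omega : s.val + 1 < n ∨ s.val + 1 = n) with h | h
  · rw [Nat.mod_eq_of_lt h]; omega
  · rw [h, Nat.mod_self]; omega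

theorem ZMod.val_add_one_of_ne_neg_one {n : ℕ} [NeZero n] {t : ZMod n} (ht : t ≠ -1) :
    (t + 1).val = t.val + 1 := by
  have hn : 2 ≤ n := by
    by_contra h
    obtain rfl : n = 1 := by have := NeZero.ne n; omega
    exact ht (Subsingleton.elim _ _)
  refine ((ZMod.eq_add_one_iff_val_s9 hn).mp rfl).resolve_right fun ⟨h, _⟩ => ht ?_
  rw [← ZMod.natCast_zmod_val t, show t.val = n - 1 by omega, Nat.cast_pred (by omega),
    ZMod.natCast_self, zero_sub]

theorem ZMod.natCast_ne_zero_of_lt {n m : ℕ} (h0 : 0 < m) (hm : m < n) : (m : ZMod n) ≠ 0 := by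
  rw [Ne, ZMod.natCast_eq_zero_iff]
  exact fun h => absurd (Nat.le_of_dvd h0 h) (by omega)

theorem isHole_of_nat_s9 {V : Type*} {G : SimpleGraph V} {n : ℕ} (hn : 4 ≤ n) (g : ℕ → V)
    (hinj : ∀ a b, a < b → b < n → g a ≠ g b)
    (hadj : ∀ a b, a < b → b < n → (G.Adj (g a) (g b) ↔ b = a + 1 ∨ a = 0 ∧ b = n - 1)) :
    IsHole G n (fun t : ZMod n => g t.val) := by
  have : NeZero n := ⟨by omega⟩
  refine ⟨hn, fun s t hst => ZMod.val_injective n ?_, fun s t => ?_⟩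
  · by_contra h
    rcases Nat.lt_or_gt_of_ne h with h | h
    · exact hinj _ _ h (ZMod.val_lt t) hst
    · exact hinj _ _ h (ZMod.val_lt s) hst.symm
  · have hs := ZMod.val_lt s
    have ht := ZMod.val_lt t
    rw [ZMod.eq_add_one_iff_val_s9 (by omega), ZMod.eq_add_one_iff_val_s9 (by omega)]
    rcases lt_trichotomy s.val t.val with h | h | h
    · rw [hadj _ _ h ht]; omega
    · simp only [h, G.irrefl, false_iff]; omega
    · rw [G.adj_comm, hadj _ _ h hs]; omega

theorem hasEvenHole_of_square {V : Type*} {G : SimpleGraph V} {w x y z : V} (hwx : G.Adj w x)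
    (hxy : G.Adj x y) (hyz : G.Adj y z) (hzw : G.Adj z w) (hwy : ¬ G.Adj w y)
    (hxz : ¬ G.Adj x z) (hwy' : w ≠ y) (hxz' : x ≠ z) : HasEvenHole G := by
  refine ⟨4, _, isHole_of_nat_s9 le_rfl (fun a => [w, x, y, z].getD a w) (fun a b hab hb => ?_)
    (fun a b hab hb => ?_), by decide⟩
  · interval_cases b <;> interval_cases a <;>
      simp [hwx.ne, hxy.ne, hyz.ne, hzw.ne', hwy', hxz']
  · interval_cases b <;> interval_cases a <;>
      simp [hwx, hxy, hyz, hzw.symm, hwy, hxz]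

def IsTransversalCycle {V : Type*} (G : SimpleGraph V) {ℓ : ℕ} (B : ZMod ℓ → Set V)
    (p : ZMod ℓ → V) : Prop :=
  ∀ k, p k ∈ B k ∧ G.Adj (p k) (p (k + 1))

/-- The path `p (i + 1), p (i + 2), …, p (i - 1)` around the buoy, skipping bag `i`. -/
def IsTransversalPath {V : Type*} (G : SimpleGraph V) {ℓ : ℕ} (B : ZMod ℓ → Set V)
    (p : ZMod ℓ → V) (i : ZMod ℓ) : Prop :=
  (∀ k, p k ∈ B k) ∧ ∀ k, k ≠ i - 1 → k ≠ i → G.Adj (p k) (p (k + 1))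

def IsSpiral {V : Type*} (G : SimpleGraph V) {ℓ : ℕ} (B : ZMod ℓ → Set V) (x : ℕ → V) : Prop :=
  ∀ m : ℕ, x m ∈ B m ∧ G.Adj (x m) (x (m + 1))

theorem IsSpiral.mem_add {V : Type*} {G : SimpleGraph V} {ℓ : ℕ} {B : ZMod ℓ → Set V}
    {x : ℕ → V} (hx : IsSpiral G B x) (m : ℕ) : x (m + ℓ) ∈ B m := by
  simpa using (hx (m + ℓ)).1

namespace IsBuoy

variable {V : Type*} {G : SimpleGraph V} {ℓ : ℕ} {B : ZMod ℓ → Set V}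

theorem five_le (hB : IsBuoy G ℓ B) : 5 ≤ ℓ := hB.1

theorem nonempty (hB : IsBuoy G ℓ B) (i : ZMod ℓ) : (B i).Nonempty := hB.2.1 i

theorem isClique (hB : IsBuoy G ℓ B) (i : ZMod ℓ) : G.IsClique (B i) := hB.2.2.1 i

theorem neZero (hB : IsBuoy G ℓ B) : NeZero ℓ := ⟨by have := hB.five_le; omega⟩

theorem adj_of_mem (hB : IsBuoy G ℓ B) {i : ZMod ℓ} {u v : V} (hu : u ∈ B i) (hv : v ∈ B i)
    (huv : u ≠ v) : G.Adj u v :=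
  hB.isClique i hu hv huv

theorem eq_of_mem (hB : IsBuoy G ℓ B) {i j : ZMod ℓ} {v : V} (hi : v ∈ B i) (hj : v ∈ B j) :
    i = j := by
  by_contra h
  exact Set.disjoint_left.mp (hB.2.2.2.1 h) hi hj

theorem exists_adj_succ (hB : IsBuoy G ℓ B) {i : ZMod ℓ} {v : V} (hv : v ∈ B i) :
    ∃ u ∈ B (i + 1), G.Adj v u :=
  hB.2.2.2.2.1 i v hv

theorem exists_adj_pred (hB : IsBuoy G ℓ B) {i : ZMod ℓ} {v : V} (hv : v ∈ B i) :
    ∃ u ∈ B (i - 1), G.Adj v u :=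
  hB.2.2.2.2.2.1 i v hv

theorem eq_or_eq_or_eq_of_adj (hB : IsBuoy G ℓ B) {i j : ZMod ℓ} {u v : V} (hu : u ∈ B i)
    (hv : v ∈ B j) (h : G.Adj u v) : j = i ∨ j = i + 1 ∨ j = i - 1 := by
  by_contra! hne
  exact hB.2.2.2.2.2.2 i j hne.1 hne.2.1 hne.2.2 u hu v hv h

theorem exists_not_adj_of_not_isClique_union (hB : IsBuoy G ℓ B) {j k : ZMod ℓ}
    (h : ¬ G.IsClique (B j ∪ B k)) : ∃ a ∈ B j, ∃ b ∈ B k, ¬ G.Adj a b := by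
  by_contra! hadj
  refine h (Set.pairwise_union.mpr ⟨hB.isClique j, hB.isClique k, fun a ha b hb _ => ?_⟩)
  exact ⟨hadj a ha b hb, (hadj a ha b hb).symm⟩

theorem add_ne_add (hB : IsBuoy G ℓ B) (i : ZMod ℓ) {m n : ℤ} (hmn : m < n) (hnm : n < m + 5) :
    i + m ≠ i + n := by
  rw [Ne, add_right_inj, ZMod.intCast_eq_intCast_iff_dvd_sub]
  intro h
  have := Int.le_of_dvd (by omega) h
  linarith [hB.five_le]

theorem add_one_ne (hB : IsBuoy G ℓ B) (i : ZMod ℓ) : i + 1 ≠ i := by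
  simpa using (hB.add_ne_add i (m := 0) (n := 1) (by omega) (by omega)).symm

theorem sub_one_ne (hB : IsBuoy G ℓ B) (i : ZMod ℓ) : i - 1 ≠ i := by
  simpa [sub_eq_add_neg] using hB.add_ne_add i (m := -1) (n := 0) (by omega) (by omega)

theorem ne_of_mem_add_one (hB : IsBuoy G ℓ B) {j : ZMod ℓ} {u v : V} (hu : u ∈ B j)
    (hv : v ∈ B (j + 1)) : u ≠ v := by
  rintro rfl
  exact hB.add_one_ne j (hB.eq_of_mem hu hv).symm

theorem near_of_adj_s9 (hB : IsBuoy G ℓ B) {i : ZMod ℓ} {a b : ℕ} {u v : V} (ha : a < ℓ)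
    (hb : b < ℓ) (hu : u ∈ B (i + a)) (hv : v ∈ B (i + b)) (h : G.Adj u v) :
    a = b ∨ b = a + 1 ∨ a = b + 1 ∨ a + 1 = ℓ ∧ b = 0 ∨ b + 1 = ℓ ∧ a = 0 := by
  have key : ∀ {a b : ℕ}, a < ℓ → b < ℓ → (b : ZMod ℓ) = a + 1 →
      b = a + 1 ∨ a + 1 = ℓ ∧ b = 0 := by
    intro a b ha hb h
    rw [← Nat.cast_add_one, ZMod.natCast_eq_natCast_iff', Nat.mod_eq_of_lt hb] at h
    rcases (by omega : a + 1 < ℓ ∨ a + 1 = ℓ) with h' | h'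
    · rw [Nat.mod_eq_of_lt h'] at h; omega
    · rw [h', Nat.mod_self] at h; omega
  rcases hB.eq_or_eq_or_eq_of_adj hu hv h with h | h | h
  · rw [add_right_inj, ZMod.natCast_eq_natCast_iff', Nat.mod_eq_of_lt ha,
      Nat.mod_eq_of_lt hb] at h
    omega
  · rw [add_assoc, add_right_inj] at h
    have := key ha hb h; omega
  · rw [add_sub_assoc, add_right_inj, eq_sub_iff_add_eq] at h
    have := key hb ha h.symm; omega

/-- A cycle `g 0, …, g (n - 1)` winding once around the buoy, with `g a` in bag `i + β a`, is a
hole as soon as the chords between vertices in neighbouring bags are excluded. -/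
theorem isHole_of_rim (hB : IsBuoy G ℓ B) (i : ZMod ℓ) {n : ℕ} (hn : 4 ≤ n) (g : ℕ → V)
    (β : ℕ → ℕ) (hβ : ∀ a < n, β a < ℓ) (hmem : ∀ a < n, g a ∈ B (i + β a))
    (hstall : ∀ a b, a < b → b < n → β a = β b → b = a + 1)
    (hsucc : ∀ a, a + 1 < n → G.Adj (g a) (g (a + 1))) (hlast : G.Adj (g (n - 1)) (g 0))
    (hchord : ∀ a b, a + 1 < b → b < n → ¬ (a = 0 ∧ b = n - 1) →
      β b = β a + 1 ∨ β a = β b + 1 ∨ β a + 1 = ℓ ∧ β b = 0 ∨ β b + 1 = ℓ ∧ β a = 0 →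
      ¬ G.Adj (g a) (g b)) :
    IsHole G n (fun t : ZMod n => g t.val) := by
  refine isHole_of_nat_s9 hn g (fun a b hab hb h => ?_) (fun a b hab hb => ⟨fun h => ?_, ?_⟩)
  · have hbag := hB.eq_of_mem (hmem a (by omega)) (h ▸ hmem b hb)
    rw [add_right_inj, ZMod.natCast_eq_natCast_iff', Nat.mod_eq_of_lt (hβ a (by omega)),
      Nat.mod_eq_of_lt (hβ b hb)] at hbag
    obtain rfl := hstall a b hab hb hbag
    exact G.irrefl (h ▸ hsucc a hb)
  · by_contra hcyc
    rcases hB.near_of_adj_s9 (hβ a (by omega)) (hβ b hb) (hmem a (by omega)) (hmem b hb) h with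
      hβab | hnear
    · exact hcyc (Or.inl (hstall a b hab hb hβab))
    · exact hchord a b (by omega) hb (fun h' => hcyc (Or.inr h')) (by omega) h
  · rintro (rfl | ⟨rfl, rfl⟩)
    · exact hsucc a hb
    · exact hlast.symm

theorem exists_chain (hB : IsBuoy G ℓ B) {j : ZMod ℓ} {v : V} (hv : v ∈ B j) :
    ∃ c : ℕ → V, c 0 = v ∧ ∀ m : ℕ, c m ∈ B (j + m) ∧ G.Adj (c m) (c (m + 1)) := by
  choose nxt hmem hadj using fun (k : ZMod ℓ) (u : B k) => hB.exists_adj_succ u.2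
  let c : (m : ℕ) → B (j + m) := fun m =>
    Nat.rec ⟨v, by simpa using hv⟩ (fun m u => ⟨nxt _ u, by simpa [add_assoc] using hmem _ u⟩) m
  refine ⟨fun m => (c m).1, rfl, fun m => ?_⟩
  exact ⟨(c m).2, hadj _ (c m)⟩

theorem exists_isTransversalPath (hB : IsBuoy G ℓ B) {i : ZMod ℓ} {u : V} (hu : u ∈ B (i + 1)) :
    ∃ p, IsTransversalPath G B p i ∧ p (i + 1) = u := by
  have := hB.neZero
  obtain ⟨c, hc0, hc⟩ := hB.exists_chain hu
  refine ⟨fun k => c (k - (i + 1)).val, ⟨fun k => ?_, fun k _ hk => ?_⟩, by simpa using hc0⟩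
  · simpa [ZMod.natCast_zmod_val] using (hc (k - (i + 1)).val).1
  · have hne : k - (i + 1) ≠ -1 := fun h => hk (by linear_combination h)
    have := (hc (k - (i + 1)).val).2
    rwa [← ZMod.val_add_one_of_ne_neg_one hne, sub_add_eq_add_sub] at this

theorem isHole_of_isTransversalCycle (hB : IsBuoy G ℓ B) {p : ZMod ℓ → V}
    (hp : IsTransversalCycle G B p) : IsHole G ℓ p := by
  refine ⟨by linarith [hB.five_le], fun k k' h => hB.eq_of_mem (h ▸ (hp k).1) (hp k').1,
    fun k k' => ⟨fun h => ?_, ?_⟩⟩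
  · rcases hB.eq_or_eq_or_eq_of_adj (hp k).1 (hp k').1 h with rfl | h' | rfl
    · exact absurd h (G.irrefl)
    · exact Or.inl h'
    · exact Or.inr (sub_add_cancel k 1).symm
  · rintro (rfl | rfl)
    · exact (hp k).2
    · exact (hp k').2.symm

theorem adj_or_adj_of_isTransversalCycle (hB : IsBuoy G ℓ B) (hpan : ¬ HasInducedPan G)
    {p : ZMod ℓ → V} (hp : IsTransversalCycle G B p) {k : ZMod ℓ} {x : V} (hx : x ∈ B k) :
    G.Adj x (p (k - 1)) ∨ G.Adj x (p (k + 1)) := by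
  by_contra! h
  have hxk : x ≠ p k := by rintro rfl; exact h.2 (hp k).2
  refine hpan ⟨ℓ, p, x, hB.isHole_of_isTransversalCycle hp, ?_, k,
    hB.adj_of_mem hx (hp k).1 hxk, fun j hj => ?_⟩
  · rintro ⟨j, rfl⟩
    exact hxk (by rw [hB.eq_of_mem (hp j).1 hx])
  · rcases hB.eq_or_eq_or_eq_of_adj hx (hp j).1 hj with rfl | rfl | rfl
    · rfl
    · exact absurd hj h.2
    · exact absurd hj h.1

theorem isTransversalCycle_update (hB : IsBuoy G ℓ B) {p : ZMod ℓ → V} {i : ZMod ℓ}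
    (hp : IsTransversalPath G B p i) {w : V} (hw : w ∈ B i) (hwa : G.Adj w (p (i - 1)))
    (hwd : G.Adj w (p (i + 1))) : IsTransversalCycle G B (update p i w) := by
  intro k
  refine ⟨?_, ?_⟩
  · rcases eq_or_ne k i with rfl | hk
    · simpa using hw
    · simpa [update_of_ne hk] using hp.1 k
  · by_cases hk : k = i
    · subst hk; simpa [update_of_ne (hB.add_one_ne k)] using hwd
    by_cases hk' : k = i - 1
    · subst hk'; simpa [update_of_ne (hB.sub_one_ne i)] using hwa.symm
    · have : k + 1 ≠ i := fun h => hk' (eq_sub_of_add_eq h)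
      simpa [update_of_ne hk, update_of_ne this] using hp.2 k hk' hk

theorem exists_isHole_add_one (hB : IsBuoy G ℓ B) {p : ZMod ℓ → V} {i : ZMod ℓ}
    (hp : IsTransversalPath G B p i) {x y : V} (hx : x ∈ B i) (hy : y ∈ B i)
    (hxa : G.Adj x (p (i - 1))) (hyd : G.Adj y (p (i + 1))) (hxd : ¬ G.Adj x (p (i + 1)))
    (hya : ¬ G.Adj y (p (i - 1))) : ∃ f : ZMod (ℓ + 1) → V, IsHole G (ℓ + 1) f := by
  have hℓ := hB.five_le
  have hxy : x ≠ y := by rintro rfl; exact hya hxa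
  have hlast : p (i + ((ℓ - 1 : ℕ) : ZMod ℓ)) = p (i - 1) := by
    rw [Nat.cast_pred (by omega), ZMod.natCast_self, zero_sub, ← sub_eq_add_neg]
  let g : ℕ → V := fun a => if a = 0 then x else if a = 1 then y else p (i + (a - 1 : ℕ))
  refine ⟨_, hB.isHole_of_rim i (n := ℓ + 1) (by omega) g (· - 1) (fun a ha => by omega)
    (fun a _ => ?_) (fun a b _ _ _ => by omega) (fun a ha => ?_) ?_ ?_⟩
  · simp only [g]
    split_ifs with h0 h1
    · simpa [h0] using hx
    · simpa [h1] using hy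
    · exact hp.1 _
  · rcases (by omega : a = 0 ∨ a = 1 ∨ 2 ≤ a) with rfl | rfl | h2
    · simpa [g] using hB.adj_of_mem hx hy hxy
    · simpa [g] using hyd
    · have hk0 := ZMod.natCast_ne_zero_of_lt (n := ℓ) (m := a - 1) (by omega) (by omega)
      have hk1 := ZMod.natCast_ne_zero_of_lt (n := ℓ) (m := a) (by omega) (by omega)
      have := hp.2 (i + (a - 1 : ℕ)) (fun h => hk1 ?_) (fun h => hk0 ?_)
      · simpa [g, show a ≠ 0 by omega, show a ≠ 1 by omega, add_assoc,
          Nat.cast_sub (show 1 ≤ a by omega)] using this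
      · rw [show a = a - 1 + 1 by omega, Nat.cast_succ]; linear_combination h
      · linear_combination h
  · simpa [g, show ℓ ≠ 0 by omega, show ℓ ≠ 1 by omega, hlast] using hxa.symm
  · intro a b hab hb hnot hnear
    obtain ⟨rfl, rfl⟩ | ⟨rfl, hb⟩ : a = 0 ∧ b = 2 ∨ a = 1 ∧ b = ℓ := by omega
    · simpa [g] using hxd
    · simpa [g, hb, show ℓ ≠ 0 by omega, show ℓ ≠ 1 by omega, hlast] using hya

theorem adj_or_adj_of_isTransversalPath_of_adj (hB : IsBuoy G ℓ B) (heven : ¬ HasEvenHole G)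
    (hodd : Odd ℓ) {p : ZMod ℓ → V} {i : ZMod ℓ} (hp : IsTransversalPath G B p i) {x y : V}
    (hx : x ∈ B i) (hy : y ∈ B i) (hxa : G.Adj x (p (i - 1))) (hyd : G.Adj y (p (i + 1))) :
    G.Adj x (p (i + 1)) ∨ G.Adj y (p (i - 1)) := by
  by_contra! h
  obtain ⟨f, hf⟩ := hB.exists_isHole_add_one hp hx hy hxa hyd h.1 h.2
  exact heven ⟨ℓ + 1, f, hf, hodd.add_one⟩

theorem exists_isTransversalCycle_update (hB : IsBuoy G ℓ B) (heven : ¬ HasEvenHole G)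
    (hodd : Odd ℓ) {p : ZMod ℓ → V} {i : ZMod ℓ} (hp : IsTransversalPath G B p i) :
    ∃ w ∈ B i, IsTransversalCycle G B (update p i w) := by
  obtain ⟨x, hx, hax⟩ := hB.exists_adj_succ (hp.1 (i - 1))
  obtain ⟨y, hy, hdy⟩ := hB.exists_adj_pred (hp.1 (i + 1))
  rw [sub_add_cancel] at hx
  rw [add_sub_cancel_right] at hy
  rcases hB.adj_or_adj_of_isTransversalPath_of_adj heven hodd hp hx hy hax.symm hdy.symm with
    h | h
  · exact ⟨x, hx, hB.isTransversalCycle_update hp hx hax.symm h⟩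
  · exact ⟨y, hy, hB.isTransversalCycle_update hp hy h hdy.symm⟩

theorem adj_or_adj_of_isTransversalPath (hB : IsBuoy G ℓ B) (hpan : ¬ HasInducedPan G)
    (heven : ¬ HasEvenHole G) (hodd : Odd ℓ) {p : ZMod ℓ → V} {i : ZMod ℓ}
    (hp : IsTransversalPath G B p i) {x : V} (hx : x ∈ B i) :
    G.Adj x (p (i - 1)) ∨ G.Adj x (p (i + 1)) := by
  obtain ⟨w, -, hc⟩ := hB.exists_isTransversalCycle_update heven hodd hp
  simpa [update_of_ne (hB.add_one_ne i), update_of_ne (hB.sub_one_ne i)] using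
    hB.adj_or_adj_of_isTransversalCycle hpan hc hx

theorem exists_isTransversalCycle_of_adj (hB : IsBuoy G ℓ B) (heven : ¬ HasEvenHole G)
    (hodd : Odd ℓ) {j : ZMod ℓ} {u v : V} (hu : u ∈ B j) (hv : v ∈ B (j + 1))
    (huv : G.Adj u v) : ∃ p, IsTransversalCycle G B p ∧ p j = u ∧ p (j + 1) = v := by
  have h1m : j + 1 ≠ j - 1 := by
    simpa [sub_eq_add_neg] using (hB.add_ne_add j (m := -1) (n := 1) (by omega) (by omega)).symm
  obtain ⟨q, hq, hqv⟩ := hB.exists_isTransversalPath hv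
  have hq' : IsTransversalPath G B (update q j u) (j - 1) := by
    refine ⟨fun k => ?_, fun k _ hk => ?_⟩
    · rcases eq_or_ne k j with rfl | hkj
      · simpa using hu
      · simpa [update_of_ne hkj] using hq.1 k
    · by_cases hkj : k = j
      · subst hkj; simpa [update_of_ne (hB.add_one_ne k), hqv] using huv
      · have : k + 1 ≠ j := fun h => hk (eq_sub_of_add_eq h)
        simpa [update_of_ne hkj, update_of_ne this] using hq.2 k hk hkj
  obtain ⟨w, -, hc⟩ := hB.exists_isTransversalCycle_update heven hodd hq'
  exact ⟨_, hc, by simp [update_of_ne (hB.sub_one_ne j).symm],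
    by simp [update_of_ne h1m, update_of_ne (hB.add_one_ne j), hqv]⟩

theorem exists_isTransversalPath_of_isTransversalCycle (hB : IsBuoy G ℓ B) {p : ZMod ℓ → V}
    (hp : IsTransversalCycle G B p) {i : ZMod ℓ} {a d : V} (ha : a ∈ B (i - 1))
    (hd : d ∈ B (i + 1)) (hap : G.Adj a (p (i - 2))) (hdp : G.Adj d (p (i + 2))) :
    ∃ q, IsTransversalPath G B q i ∧ q (i - 1) = a ∧ q (i + 1) = d := by
  have hne : ∀ {m n : ℤ}, m < n → n < m + 5 → i + m ≠ i + n := hB.add_ne_add i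
  have h1 : i - 1 ≠ i + 1 := by
    simpa [sub_eq_add_neg] using hne (m := -1) (n := 1) (by omega) (by omega)
  have h2 : i + 2 ≠ i + 1 := by simpa using (hne (m := 1) (n := 2) (by omega) (by omega)).symm
  have h3 : i + 2 ≠ i - 1 := by
    simpa [sub_eq_add_neg] using (hne (m := -1) (n := 2) (by omega) (by omega)).symm
  have h4 : i - 2 ≠ i + 1 := by
    simpa [sub_eq_add_neg] using hne (m := -2) (n := 1) (by omega) (by omega)
  have h5 : i - 2 ≠ i - 1 := by
    simpa [sub_eq_add_neg] using hne (m := -2) (n := -1) (by omega) (by omega)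
  refine ⟨update (update p (i - 1) a) (i + 1) d, ⟨fun k => ?_, fun k hk1 hk2 => ?_⟩,
    by simp [update_of_ne h1], by simp⟩
  · rcases eq_or_ne k (i + 1) with rfl | hk
    · simpa using hd
    rcases eq_or_ne k (i - 1) with rfl | hk'
    · simpa [update_of_ne h1] using ha
    · simpa [update_of_ne hk, update_of_ne hk'] using (hp k).1
  · rcases eq_or_ne k (i + 1) with rfl | hk
    · simpa [add_assoc, one_add_one_eq_two, update_of_ne h2, update_of_ne h3] using hdp
    rcases eq_or_ne k (i - 2) with rfl | hk'
    · have : i - 2 + 1 = i - 1 := by ring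
      simpa [this, update_of_ne h1, update_of_ne h4, update_of_ne h5] using hap.symm
    · have e1 : k + 1 ≠ i + 1 := fun h => hk2 (add_right_cancel h)
      have e2 : k + 1 ≠ i - 1 := fun h => hk' (by linear_combination h)
      simpa [update_of_ne hk, update_of_ne hk1, update_of_ne e1, update_of_ne e2] using (hp k).2

theorem isClique_union_of_odd (hB : IsBuoy G ℓ B) (hpan : ¬ HasInducedPan G)
    (heven : ¬ HasEvenHole G) (hodd : Odd ℓ) (i : ZMod ℓ) :
    G.IsClique (B (i - 1) ∪ B i) ∨ G.IsClique (B i ∪ B (i + 1)) := by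
  by_contra! h
  obtain ⟨a, ha, b, hb, hab⟩ := hB.exists_not_adj_of_not_isClique_union h.1
  obtain ⟨c, hc, d, hd, hcd⟩ := hB.exists_not_adj_of_not_isClique_union h.2
  obtain ⟨p, hp, hpb, hdp⟩ : ∃ p, IsTransversalCycle G B p ∧ p i = b ∧ G.Adj d (p (i + 2)) := by
    by_cases hbd : G.Adj b d
    · obtain ⟨p, hp, hpb, hpd⟩ := hB.exists_isTransversalCycle_of_adj heven hodd hb hd hbd
      refine ⟨p, hp, hpb, ?_⟩
      simpa [hpd, add_assoc, one_add_one_eq_two] using (hp (i + 1)).2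
    · obtain ⟨v, hv, hbv⟩ := hB.exists_adj_succ hb
      obtain ⟨p, hp, hpb, -⟩ := hB.exists_isTransversalCycle_of_adj heven hodd hb hv hbv
      refine ⟨p, hp, hpb, ?_⟩
      have := hB.adj_or_adj_of_isTransversalCycle hpan hp hd
      simpa [hpb, G.adj_comm d b, hbd, add_assoc, one_add_one_eq_two] using this
  have hap : G.Adj a (p (i - 2)) := by
    have := hB.adj_or_adj_of_isTransversalCycle hpan hp ha
    simpa [hpb, hab, sub_sub, one_add_one_eq_two] using this
  obtain ⟨q, hq, hqa, hqd⟩ := hB.exists_isTransversalPath_of_isTransversalCycle hp ha hd hap hdp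
  have hbd : G.Adj b d := by
    have := hB.adj_or_adj_of_isTransversalPath hpan heven hodd hq hb
    simpa [hqa, hqd, G.adj_comm b a, hab] using this
  have hca : G.Adj c a := by
    have := hB.adj_or_adj_of_isTransversalPath hpan heven hodd hq hc
    simpa [hqa, hqd, hcd] using this
  have := hB.adj_or_adj_of_isTransversalPath_of_adj heven hodd hq hc hb (hqa ▸ hca) (hqd ▸ hbd)
  simp [hqa, hqd, hcd, G.adj_comm b a, hab] at this

section Spiral

variable {x : ℕ → V}

theorem not_adj_of_isSpiral (hB : IsBuoy G ℓ B) (heven : ¬ HasEvenHole G) (hℓ : Even ℓ)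
    (hx : IsSpiral G B x) (k : ℕ) : ¬ G.Adj (x (k + (ℓ - 1))) (x k) := by
  intro h
  refine heven ⟨ℓ, _, hB.isHole_of_rim (k : ZMod ℓ) (by linarith [hB.five_le])
    (fun a => x (k + a)) id (fun a ha => ha) (fun a _ => by simpa using (hx (k + a)).1)
    (fun a b _ _ h => by simp at h; omega) (fun a _ => (hx (k + a)).2) (by simpa using h)
    (fun a b _ _ _ h => by simp at h; omega), hℓ⟩

theorem adj_add_of_isSpiral (hB : IsBuoy G ℓ B) (heven : ¬ HasEvenHole G) (hℓ : Even ℓ)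
    (hx : IsSpiral G B x) (k : ℕ) : G.Adj (x k) (x (k + ℓ)) := by
  refine hB.adj_of_mem (hx k).1 (hx.mem_add k) fun h => hB.not_adj_of_isSpiral heven hℓ hx k ?_
  have := hB.five_le
  rw [h]
  simpa [show k + (ℓ - 1) + 1 = k + ℓ by omega] using (hx (k + (ℓ - 1))).2

theorem adj_add_one_add_of_isSpiral (hB : IsBuoy G ℓ B) (heven : ¬ HasEvenHole G)
    (hℓ : Even ℓ) (hx : IsSpiral G B x) (k : ℕ) : G.Adj (x k) (x (k + 1 + ℓ)) := by
  have := hB.five_le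
  by_contra h
  refine heven (hasEvenHole_of_square (hx k).2 (hB.adj_add_of_isSpiral heven hℓ hx (k + 1))
    (by simpa [add_right_comm] using (hx (k + ℓ)).2.symm)
    (hB.adj_add_of_isSpiral heven hℓ hx k).symm h ?_ ?_ ?_)
  · exact fun h' => hB.not_adj_of_isSpiral heven hℓ hx (k + 1)
      (by simpa [show k + 1 + (ℓ - 1) = k + ℓ by omega] using h'.symm)
  · exact hB.ne_of_mem_add_one (hx k).1 (by simpa [add_right_comm] using hx.mem_add (k + 1))
  · exact (hB.ne_of_mem_add_one (hx.mem_add k) (by simpa using (hx (k + 1)).1)).symm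

theorem not_adj_add_two_mul_of_isSpiral (hB : IsBuoy G ℓ B) (heven : ¬ HasEvenHole G)
    (hℓ : Even ℓ) (hx : IsSpiral G B x) (k : ℕ) : ¬ G.Adj (x (k + 1)) (x (k + 2 * ℓ)) := by
  have := hB.five_le
  intro h
  refine heven (hasEvenHole_of_square h
    (by simpa [two_mul, add_assoc] using (hB.adj_add_of_isSpiral heven hℓ hx (k + ℓ)).symm)
    (by simpa [add_right_comm] using (hx (k + ℓ)).2)
    (hB.adj_add_of_isSpiral heven hℓ hx (k + 1)).symm ?_ ?_ ?_ ?_)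
  · exact fun h' => hB.not_adj_of_isSpiral heven hℓ hx (k + 1)
      (by simpa [show k + 1 + (ℓ - 1) = k + ℓ by omega] using h'.symm)
  · simpa [show k + 1 + ℓ + (ℓ - 1) = k + 2 * ℓ by omega] using
      hB.not_adj_of_isSpiral heven hℓ hx (k + 1 + ℓ)
  · exact (hB.ne_of_mem_add_one (hx.mem_add k) (by simpa using (hx (k + 1)).1)).symm
  · exact hB.ne_of_mem_add_one (by simpa [two_mul, ← add_assoc] using hx.mem_add (k + ℓ))
      (by simpa [add_right_comm] using hx.mem_add (k + 1))

theorem not_isSpiral (hB : IsBuoy G ℓ B) (heven : ¬ HasEvenHole G) (hℓ : Even ℓ) :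
    ¬ IsSpiral G B x := by
  intro hx
  have h5 := hB.five_le
  have hwin := hB.not_adj_of_isSpiral heven hℓ hx
  have hturn := hB.adj_add_of_isSpiral heven hℓ hx
  -- the hole visits the bags 0, 1, 1, 2, 2, 3, 4, …, ℓ - 1
  let g : ℕ → V := fun a => if a = 0 then x (2 * ℓ) else if a = 1 then x (2 * ℓ + 1) else
    if a = 2 then x (ℓ + 1) else if a = 3 then x (ℓ + 2) else x (a - 2)
  refine heven ⟨ℓ + 2, _, hB.isHole_of_rim 0 (n := ℓ + 2) (by omega) g (fun a => a - min 2 (a / 2))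
    (fun a ha => by omega) (fun a ha => ?_) (fun a b _ _ h => by omega) (fun a ha => ?_) ?_ ?_,
    hℓ.add even_two⟩
  · rcases (by omega : a = 0 ∨ a = 1 ∨ a = 2 ∨ a = 3 ∨ 4 ≤ a) with rfl | rfl | rfl | rfl | h4
    · simpa [g] using (hx (2 * ℓ)).1
    · simpa [g] using (hx (2 * ℓ + 1)).1
    · simpa [g] using (hx (ℓ + 1)).1
    · simpa [g] using (hx (ℓ + 2)).1
    · simpa [g, show a ≠ 0 by omega, show a ≠ 1 by omega, show a ≠ 2 by omega, show a ≠ 3 by omega,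
        show a - min 2 (a / 2) = a - 2 by omega] using (hx (a - 2)).1
  · rcases (by omega : a = 0 ∨ a = 1 ∨ a = 2 ∨ a = 3 ∨ 4 ≤ a) with rfl | rfl | rfl | rfl | h4
    · simpa [g] using (hx (2 * ℓ)).2
    · simpa [g, show ℓ + 1 + ℓ = 2 * ℓ + 1 by omega] using (hturn (ℓ + 1)).symm
    · simpa [g] using (hx (ℓ + 1)).2
    · simpa [g, add_comm] using (hturn 2).symm
    · simpa [g, show a ≠ 0 by omega, show a ≠ 1 by omega, show a ≠ 2 by omega, show a ≠ 3 by omega,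
        show a - 2 + 1 = a + 1 - 2 by omega] using (hx (a - 2)).2
  · simpa [g, show ℓ + 2 - 1 = ℓ + 1 by omega, show ℓ + 1 - 2 = ℓ - 1 by omega, show ℓ ≠ 0 by omega,
      show ℓ ≠ 1 by omega, show ℓ ≠ 2 by omega, show ℓ - 1 + 1 + ℓ = 2 * ℓ by omega] using
      hB.adj_add_one_add_of_isSpiral heven hℓ hx (ℓ - 1)
  · intro a b _ _ _ hnear
    obtain ⟨rfl, rfl⟩ | ⟨rfl, rfl⟩ | ⟨rfl, rfl⟩ | ⟨rfl, rfl⟩ | ⟨rfl, rfl⟩ :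
        a = 0 ∧ b = 2 ∨ a = 1 ∧ b = 3 ∨ a = 1 ∧ b = 4 ∨ a = 2 ∧ b = 4 ∨ a = 3 ∧ b = 5 := by
      omega
    · exact fun h => hwin (ℓ + 1) (by simpa [g, show ℓ + 1 + (ℓ - 1) = 2 * ℓ by omega] using h)
    · exact fun h => hwin (ℓ + 2) (by simpa [g, show ℓ + 2 + (ℓ - 1) = 2 * ℓ + 1 by omega] using h)
    · exact fun h => hB.not_adj_add_two_mul_of_isSpiral heven hℓ hx 1
        (by simpa [g, add_comm] using h.symm)
    · exact fun h => hwin 2 (by simpa [g, show 2 + (ℓ - 1) = ℓ + 1 by omega] using h)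
    · exact fun h => hwin 3 (by simpa [g, show 3 + (ℓ - 1) = ℓ + 2 by omega] using h)

end Spiral

theorem not_even (hB : IsBuoy G ℓ B) (heven : ¬ HasEvenHole G) : ¬ Even ℓ := fun hℓ => by
  obtain ⟨x, -, hx⟩ := hB.exists_chain (hB.nonempty 0).some_mem
  exact hB.not_isSpiral heven hℓ fun m => by simpa using hx m

end IsBuoy

theorem stmt_9 {V : Type*} (G : SimpleGraph V)
    (hpan : ¬ HasInducedPan G) (heven : ¬ HasEvenHole G)
    (ℓ : ℕ) (B : ZMod ℓ → Set V) (hB : IsBuoy G ℓ B) :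
    ∀ i : ZMod ℓ, G.IsClique (B (i - 1) ∪ B i) ∨ G.IsClique (B i ∪ B (i + 1)) :=
  hB.isClique_union_of_odd hpan heven ((Nat.even_or_odd ℓ).resolve_left (hB.not_even heven))
end

section
/- Let G be a (pan, even hole)-free graph, B an odd ℓ-buoy in G (ℓ ≥ 5), and x a vertex outside B having a neighbor in bag B_i. Then x has a neighbor in B_{i-1} or a neighbor in B_{i+1}. -/
namespace ZMod

lemma natCast_injOn_Iio (n : ℕ) : Set.InjOn (Nat.cast : ℕ → ZMod n) (Set.Iio n) :=
  fun j hj k hk h => by rw [← val_cast_of_lt hj, h, val_cast_of_lt hk]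

lemma natCast_eq_natCast_add_one_iff_s11 {n j k : ℕ} (hj : j < n) (hk : k < n) :
    (k : ZMod n) = j + 1 ↔ k = j + 1 ∨ (j + 1 = n ∧ k = 0) := by
  rw [← Nat.cast_succ, natCast_eq_natCast_iff', Nat.mod_eq_of_lt hk]
  rcases (Nat.succ_le_of_lt hj).lt_or_eq with h | h
  · rw [Nat.mod_eq_of_lt h]; omega
  · rw [h, Nat.mod_self]; omega

lemma natCast_eq_add_one_or_eq_add_one_iff {n j k : ℕ} (hjk : j < k) (hk : k < n) :
    ((k : ZMod n) = j + 1 ∨ (j : ZMod n) = k + 1) ↔ k = j + 1 ∨ (j = 0 ∧ k + 1 = n) := by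
  rw [natCast_eq_natCast_add_one_iff_s11 (hjk.trans hk) hk,
    natCast_eq_natCast_add_one_iff_s11 hk (hjk.trans hk)]
  omega

lemma natCast_sub_of_le {n m : ℕ} (h : m ≤ n) : ((n - m : ℕ) : ZMod n) = -m := by
  rw [Nat.cast_sub h, natCast_self, zero_sub]

end ZMod

section

variable {V : Type*} {G : SimpleGraph V}

lemma isHole_of_adj_iff {n : ℕ} (hn : 4 ≤ n) {c : ℕ → V} (hinj : Set.InjOn c (Set.Iio n))
    (hadj : ∀ j k, j < k → k < n → (G.Adj (c j) (c k) ↔ k = j + 1 ∨ (j = 0 ∧ k + 1 = n))) :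
    IsHole G n (fun z => c z.val) := by
  have : NeZero n := ⟨by omega⟩
  refine ⟨hn, fun z w h => ZMod.val_injective n (hinj z.val_lt w.val_lt h), fun z w => ?_⟩
  obtain ⟨a, ha, rfl⟩ : ∃ a < n, (a : ZMod n) = z := ⟨z.val, z.val_lt, z.natCast_zmod_val⟩
  obtain ⟨b, hb, rfl⟩ : ∃ b < n, (b : ZMod n) = w := ⟨w.val, w.val_lt, w.natCast_zmod_val⟩
  simp only [ZMod.val_cast_of_lt ha, ZMod.val_cast_of_lt hb]
  rcases lt_trichotomy a b with h | rfl | h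
  · rw [hadj a b h hb, ZMod.natCast_eq_add_one_or_eq_add_one_iff h hb]
  · simp only [G.irrefl, false_iff, or_self, ZMod.natCast_eq_natCast_add_one_iff_s11 ha ha]
    omega
  · rw [G.adj_comm, hadj b a h ha, ← ZMod.natCast_eq_add_one_or_eq_add_one_iff h ha, or_comm]

namespace IsHole

variable {n : ℕ} {f : ZMod n → V}

lemma natCast_injOn (hf : IsHole G n f) : Set.InjOn (fun k : ℕ => f k) (Set.Iio n) :=
  hf.2.1.comp_injOn (ZMod.natCast_injOn_Iio n)

lemma adj_natCast_iff (hf : IsHole G n f) {j k : ℕ} (hjk : j < k) (hk : k < n) :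
    G.Adj (f j) (f k) ↔ k = j + 1 ∨ (j = 0 ∧ k + 1 = n) := by
  rw [hf.2.2, ZMod.natCast_eq_add_one_or_eq_add_one_iff hjk hk]

lemma comp_add_right (hf : IsHole G n f) (r : ZMod n) : IsHole G n (fun z => f (z + r)) :=
  ⟨hf.1, hf.2.1.comp (add_left_injective r), fun i j => by
    rw [hf.2.2, add_right_comm i r 1, add_right_comm j r 1, add_left_inj, add_left_inj]⟩

lemma exists_isHole_detour (hf : IsHole G n f) {x : V} (hx : x ∉ Set.range f) {q : ℕ}
    (hq : 2 ≤ q) (hqn : q + 2 ≤ n) (h0 : G.Adj (f 0) x) (hqx : G.Adj (f q) x)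
    (hmid : ∀ k : ℕ, 0 < k → k < q → ¬ G.Adj (f k) x) :
    ∃ g : ZMod (q + 2) → V, IsHole G (q + 2) g ∧ (∀ k ≤ q, g k = f k) ∧ g (q + 1 : ℕ) = x := by
  set c := Function.update (fun k : ℕ => f k) (q + 1) x
  have hc : ∀ k ≤ q, c k = f k := fun k hk => Function.update_of_ne (by omega) _ _
  have hcx : c (q + 1) = x := Function.update_self _ _ _
  refine ⟨fun z => c z.val, isHole_of_adj_iff (by omega) ?_ ?_, fun k hk => ?_, ?_⟩
  · intro j hj k hk hjk
    simp only [Set.mem_Iio] at hj hk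
    rcases (by omega : j ≤ q ∨ j = q + 1) with hj | rfl <;>
      rcases (by omega : k ≤ q ∨ k = q + 1) with hk | rfl
    · rw [hc j hj, hc k hk] at hjk
      exact hf.natCast_injOn (by simp; omega) (by simp; omega) hjk
    · exact absurd ⟨_, (hc j hj ▸ hjk).trans hcx⟩ hx
    · exact absurd ⟨_, (hc k hk ▸ hjk.symm).trans hcx⟩ hx
    · rfl
  · intro j k hjk hk
    rcases (by omega : k ≤ q ∨ k = q + 1) with hk | rfl
    · rw [hc j (by omega), hc k hk, hf.adj_natCast_iff hjk (by omega)]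
      omega
    · rw [hc j (by omega), hcx]
      constructor
      · intro h
        by_contra hne
        exact hmid j (by omega) (by omega) h
      · rintro (h | ⟨rfl, -⟩)
        · rwa [show j = q by omega]
        · rwa [Nat.cast_zero]
  · simp only [ZMod.val_cast_of_lt (by omega : k < q + 2), hc k hk]
  · simp only [ZMod.val_cast_of_lt (by omega : q + 1 < q + 2), hcx]

end IsHole

lemma hasInducedPan_of_adj_iff {n m : ℕ} {f : ZMod n → V} {p : V} (hf : IsHole G n f)
    (hp : ∀ k < n, f k ≠ p) (hm : m < n) (hadj : ∀ k < n, G.Adj p (f k) ↔ k = m) :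
    HasInducedPan G := by
  have : NeZero n := ⟨by have := hf.1; omega⟩
  refine ⟨n, f, p, hf, ?_, m, (hadj m hm).2 rfl, fun z hz => ?_⟩
  · rintro ⟨z, hz⟩
    exact hp z.val z.val_lt (by rwa [z.natCast_zmod_val])
  · rw [← z.natCast_zmod_val, (hadj z.val z.val_lt).1 (by rwa [z.natCast_zmod_val])]

theorem IsHole.adj_one_or_adj_neg_one (hpan : ¬ HasInducedPan G) (heven : ¬ HasEvenHole G)
    {n : ℕ} {f : ZMod n → V} (hf : IsHole G n f) {x : V} (hx : x ∉ Set.range f)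
    (h0 : G.Adj (f 0) x) : G.Adj (f 1) x ∨ G.Adj (f (-1)) x := by
  by_contra! ⟨h1, hlast⟩
  have hn := hf.1
  have hn1 : ((n - 1 : ℕ) : ZMod n) = -1 := by rw [ZMod.natCast_sub_of_le (by omega), Nat.cast_one]
  have hn2 : ((n - 2 : ℕ) : ZMod n) = -2 := by
    rw [ZMod.natCast_sub_of_le (by omega), Nat.cast_ofNat]
  have hS : ∃ k, 0 < k ∧ k < n ∧ G.Adj (f k) x := by
    by_contra! hS
    refine hpan (hasInducedPan_of_adj_iff hf (fun k _ h => hx ⟨_, h⟩) (m := 0) (by omega)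
      fun k hk => ?_)
    rw [G.adj_comm]
    refine ⟨fun h => by by_contra hk0; exact hS k (by omega) hk h, ?_⟩
    rintro rfl
    rwa [Nat.cast_zero]
  classical
  obtain ⟨q, ⟨hq0, hqn, hqx⟩, hmid⟩ :
      ∃ q, (0 < q ∧ q < n ∧ G.Adj (f q) x) ∧ ∀ k, 0 < k → k < q → ¬ G.Adj (f k) x :=
    ⟨Nat.find hS, Nat.find_spec hS, fun k hk0 hk h =>
      Nat.find_min hS hk ⟨hk0, hk.trans (Nat.find_spec hS).2.1, h⟩⟩
  have hq1 : q ≠ 1 := by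
    rintro rfl
    exact h1 (by rwa [Nat.cast_one] at hqx)
  have hqn1 : q ≠ n - 1 := by
    rintro rfl
    exact hlast (by rwa [hn1] at hqx)
  rcases (by omega : q = n - 2 ∨ q + 3 ≤ n) with rfl | hq3
  · -- `f (-2)`, `f (-1)`, `f 0`, `x` form a 4-hole
    have hrot := hf.comp_add_right (-2)
    obtain ⟨g, hg, -⟩ := hrot.exists_isHole_detour (q := 2) (fun ⟨z, hz⟩ => hx ⟨_, hz⟩) le_rfl
      (by omega) (by simpa [← hn2] using hqx) (by simpa using h0) fun k hk0 hk2 => by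
        obtain rfl : k = 1 := by omega
        simpa [show (1 : ZMod n) + -2 = -1 by ring] using hlast
    exact heven ⟨2 + 2, g, hg, even_two.add even_two⟩
  · obtain ⟨g, hg, hgf, hgx⟩ := hf.exists_isHole_detour hx (by omega) (by omega) h0 hqx hmid
    refine hpan (hasInducedPan_of_adj_iff hg (p := f (-1)) (m := 0) ?_ (by omega) ?_)
    · intro k hk
      rcases (by omega : k ≤ q ∨ k = q + 1) with hk | rfl
      · rw [hgf k hk, ← hn1]
        exact fun h => absurd (hf.natCast_injOn (by simp; omega) (by simp; omega) h) (by omega)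
      · rw [hgx]
        exact fun h => hx ⟨_, h.symm⟩
    · intro k hk
      rcases (by omega : k ≤ q ∨ k = q + 1) with hk | rfl
      · rw [hgf k hk, G.adj_comm, ← hn1, hf.adj_natCast_iff (by omega) (by omega)]
        omega
      · rw [hgx]
        simp only [hlast, false_iff]
        omega

namespace IsBuoy

variable {ℓ : ℕ} {B : ZMod ℓ → Set V} {i : ZMod ℓ}

lemma ne_of_mem_natCast (hB : IsBuoy G ℓ B) {j k : ℕ} (hj : j < ℓ) (hk : k < ℓ) (hjk : j ≠ k)
    {u v : V} (hu : u ∈ B (i + j)) (hv : v ∈ B (i + k)) : u ≠ v := by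
  obtain ⟨-, -, -, hdisj, -⟩ := hB
  rintro rfl
  refine Set.disjoint_left.1 (hdisj fun h => hjk ?_) hu hv
  exact ZMod.natCast_injOn_Iio ℓ hj hk (add_left_cancel h)

lemma eq_of_adj_natCast (hB : IsBuoy G ℓ B) {j k : ℕ} (hjk : j < k) (hk : k < ℓ) {u v : V}
    (hu : u ∈ B (i + j)) (hv : v ∈ B (i + k)) (huv : G.Adj u v) :
    k = j + 1 ∨ (j = 0 ∧ k + 1 = ℓ) := by
  rw [← ZMod.natCast_eq_add_one_or_eq_add_one_iff hjk hk]
  obtain ⟨-, -, -, -, -, -, hfar⟩ := hB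
  by_contra! h
  refine hfar (i + j) (i + k) (fun e => ?_) ?_ (fun e => ?_) u hu v hv huv
  · exact hjk.ne' (ZMod.natCast_injOn_Iio ℓ hk (hjk.trans hk) (add_left_cancel e))
  · rw [add_assoc]
    exact fun e => h.1 (add_left_cancel e)
  · rw [eq_sub_iff_add_eq, add_assoc] at e
    exact h.2 (add_left_cancel e).symm

lemma exists_walk (hB : IsBuoy G ℓ B) {a : V} (ha : a ∈ B i) :
    ∃ v : ℕ → V, v 0 = a ∧ (∀ k : ℕ, v k ∈ B (i + k)) ∧ ∀ k, G.Adj (v k) (v (k + 1)) := by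
  obtain ⟨-, -, -, -, hnext, -⟩ := hB
  choose next hnext hadj using hnext
  let w : (k : ℕ) → {u // u ∈ B (i + k)} := fun k => Nat.rec ⟨a, by simpa using ha⟩
    (fun k u => ⟨next _ u.1 u.2, by rw [Nat.cast_succ, ← add_assoc]; exact hnext _ _ _⟩) k
  exact ⟨fun k => (w k).1, rfl, fun k => (w k).2, fun k => hadj _ _ (w k).2⟩

lemma isHole_of_cycle (hB : IsBuoy G ℓ B) {c : ℕ → V} (hc : ∀ k < ℓ, c k ∈ B (i + k))
    (hadj : ∀ k, k + 1 < ℓ → G.Adj (c k) (c (k + 1))) (hclose : G.Adj (c (ℓ - 1)) (c 0)) :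
    IsHole G ℓ (fun z => c z.val) := by
  have := hB.1
  refine isHole_of_adj_iff (by omega) (fun j hj k hk h => ?_) fun j k hjk hk =>
    ⟨hB.eq_of_adj_natCast hjk hk (hc j (hjk.trans hk)) (hc k hk), ?_⟩
  · by_contra hne
    exact hB.ne_of_mem_natCast hj hk hne (hc j hj) (hc k hk) h
  · rintro (rfl | ⟨rfl, hk'⟩)
    · exact hadj j hk
    · rw [show k = ℓ - 1 by omega]
      exact hclose.symm

lemma isHole_of_path (hB : IsBuoy G ℓ B) {v : ℕ → V} (hv : ∀ k < ℓ, v k ∈ B (i + k))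
    (hadj : ∀ k, k + 1 < ℓ → G.Adj (v k) (v (k + 1))) (hopen : ¬ G.Adj (v (ℓ - 1)) (v 0))
    {w : V} (hw : w ∈ B (i - 1)) (hw0 : G.Adj w (v 0)) (hw2 : ¬ G.Adj (v (ℓ - 2)) w) :
    IsHole G (ℓ + 1) (fun z => Function.update v ℓ w z.val) := by
  have hℓ := hB.1
  have hclique : ∀ j, G.IsClique (B j) := hB.2.2.1
  set c := Function.update v ℓ w
  have hc : ∀ k < ℓ, c k = v k := fun k hk => Function.update_of_ne hk.ne _ _
  have hcw : c ℓ = w := Function.update_self _ _ _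
  have hlast : i + ((ℓ - 1 : ℕ) : ZMod ℓ) = i - 1 := by
    rw [ZMod.natCast_sub_of_le (by omega), Nat.cast_one, sub_eq_add_neg]
  have hw' : w ∈ B (i + (ℓ - 1 : ℕ)) := hlast ▸ hw
  have hvw : ∀ j < ℓ, v j ≠ w := by
    intro j hj h
    by_cases hj1 : j = ℓ - 1
    · subst hj1
      exact hopen (by rw [h]; exact hw0)
    · exact hB.ne_of_mem_natCast hj (by omega) hj1 (hv j hj) hw' h
  have hadjw : ∀ j < ℓ, G.Adj (v j) w ↔ j + 1 = ℓ ∨ j = 0 := by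
    intro j hj
    refine ⟨fun h => ?_, ?_⟩
    · by_contra! hj'
      rcases hB.eq_of_adj_natCast (by omega : j < ℓ - 1) (by omega) (hv j hj) hw' h with h' | h'
      · exact hw2 (show j = ℓ - 2 by omega ▸ h)
      · omega
    · rintro (h | rfl)
      · rw [show j = ℓ - 1 by omega]
        exact hclique (i - 1) (hlast ▸ hv (ℓ - 1) (by omega)) hw (hvw _ (by omega))
      · exact hw0.symm
  refine isHole_of_adj_iff (by omega) (fun j hj k hk h => ?_) fun j k hjk hk => ?_
  · simp only [Set.mem_Iio] at hj hk
    rcases (by omega : j < ℓ ∨ j = ℓ) with hj | hj <;>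
      rcases (by omega : k < ℓ ∨ k = ℓ) with hk | hk
    · rw [hc j hj, hc k hk] at h
      by_contra hne
      exact hB.ne_of_mem_natCast hj hk hne (hv j hj) (hv k hk) h
    · rw [hc j hj, hk, hcw] at h
      exact absurd h (hvw j hj)
    · rw [hj, hcw, hc k hk] at h
      exact absurd h.symm (hvw k hk)
    · rw [hj, hk]
  · rcases (by omega : k < ℓ ∨ k = ℓ) with hk | hk
    · rw [hc j (by omega), hc k hk]
      refine ⟨fun h => ?_, ?_⟩
      · rcases hB.eq_of_adj_natCast hjk hk (hv j (by omega)) (hv k hk) h with h' | ⟨rfl, hk'⟩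
        · exact Or.inl h'
        · exact absurd (show k = ℓ - 1 by omega ▸ h.symm) hopen
      · rintro (rfl | ⟨-, hk'⟩)
        · exact hadj j hk
        · omega
    · subst k
      rw [hc j hjk, hcw, hadjw j hjk]
      omega

theorem exists_isHole_through (hB : IsBuoy G ℓ B) (hodd : Odd ℓ) (heven : ¬ HasEvenHole G)
    {a : V} (ha : a ∈ B i) : ∃ f : ZMod ℓ → V, IsHole G ℓ f ∧ f 0 = a ∧ ∀ j, f j ∈ B (i + j) := by
  have hℓ := hB.1
  have : NeZero ℓ := ⟨by omega⟩
  have hlast : i + ((ℓ - 1 : ℕ) : ZMod ℓ) = i - 1 := by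
    rw [ZMod.natCast_sub_of_le (by omega), Nat.cast_one, sub_eq_add_neg]
  obtain ⟨v, hv0, hvB, hvadj⟩ := hB.exists_walk ha
  have hv2 : G.Adj (v (ℓ - 2)) (v (ℓ - 1)) := by
    simpa [show ℓ - 2 + 1 = ℓ - 1 by omega] using hvadj (ℓ - 2)
  by_cases hclose : ∃ w ∈ B (i - 1), G.Adj (v (ℓ - 2)) w ∧ G.Adj w a
  · obtain ⟨w, hwB, hvw, hwa⟩ := hclose
    set c := Function.update v (ℓ - 1) w
    have hc : ∀ k, k ≠ ℓ - 1 → c k = v k := fun k hk => Function.update_of_ne hk _ _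
    have hcw : c (ℓ - 1) = w := Function.update_self _ _ _
    have hcB : ∀ k < ℓ, c k ∈ B (i + k) := by
      intro k hk
      by_cases h : k = ℓ - 1
      · rwa [h, hcw, hlast]
      · rw [hc k h]
        exact hvB k
    refine ⟨fun z => c z.val, hB.isHole_of_cycle hcB (fun k hk => ?_) ?_, ?_, fun j => ?_⟩
    · by_cases h : k + 1 = ℓ - 1
      · rwa [hc k (by omega), h, hcw, show k = ℓ - 2 by omega]
      · rw [hc k (by omega), hc (k + 1) h]
        exact hvadj k
    · rwa [hcw, hc 0 (by omega), hv0]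
    · show c (0 : ZMod ℓ).val = a
      rw [ZMod.val_zero, hc 0 (by omega), hv0]
    · simpa only [j.natCast_zmod_val] using hcB j.val j.val_lt
  · push Not at hclose
    obtain ⟨w, hwB, haw⟩ := hB.2.2.2.2.2.1 i a ha
    refine absurd ⟨ℓ + 1, _, hB.isHole_of_path (fun k _ => hvB k) (fun k _ => hvadj k) ?_ hwB
      (hv0 ▸ haw.symm) ?_, hodd.add_one⟩ heven
    · rw [hv0]
      exact hclose _ (hlast ▸ hvB (ℓ - 1)) hv2
    · exact fun h => hclose w hwB h haw.symm

end IsBuoy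

end

theorem stmt_11 {V : Type*} (G : SimpleGraph V)
    (hpan : ¬ HasInducedPan G) (heven : ¬ HasEvenHole G)
    (ℓ : ℕ) (hodd : Odd ℓ) (B : ZMod ℓ → Set V) (hB : IsBuoy G ℓ B)
    (x : V) (hx : x ∉ ⋃ j, B j)
    (i : ZMod ℓ) (hi : ∃ b ∈ B i, G.Adj x b) :
    (∃ b ∈ B (i - 1), G.Adj x b) ∨ (∃ b ∈ B (i + 1), G.Adj x b) := by
  obtain ⟨a, ha, hxa⟩ := hi
  obtain ⟨f, hf, rfl, hfB⟩ := hB.exists_isHole_through hodd heven ha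
  have hxf : x ∉ Set.range f := fun ⟨j, hj⟩ => hx (Set.mem_iUnion.2 ⟨i + j, hj ▸ hfB j⟩)
  rcases hf.adj_one_or_adj_neg_one hpan heven hxf hxa.symm with h | h
  · exact Or.inr ⟨f 1, hfB 1, h.symm⟩
  · exact Or.inl ⟨f (-1), by simpa [sub_eq_add_neg] using hfB (-1), h.symm⟩
end
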